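/- arXiv:1801.07865 — 4 statements merged into one kernel-verified Lean document; each statement's English description precedes it below -/
import Mathlib

section
/- If (S_1,…,S_m) is a counterexample with parameters (m,n,k) that is minimal in the lexicographic order on (m,n,k), then for every subset I ⊆ {1,…,m} with 2 ≤ |I| ≤ m−1, one has k − 1 − |⋂_{i∈I} S_i| ≥ Σ_{i∈I} (k − |S_i|). -/
/-- `K = Frac(ℚ[α₁,…,αₙ])`, the field of rational functions in `n` indeterminates over `ℚ`. -/
noncomputable abbrev Kf (n : ℕ) : Type := FractionRing (MvPolynomial (Fin n) ℚ)

/-- For a set `S ⊆ {1,…,n}`, the polynomial `p_S(x) = ∏_{j ∈ S} (x - α_j)`. -/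
noncomputable def pS {n : ℕ} (S : Finset (Fin n)) : Polynomial (Kf n) :=
  ∏ j ∈ S, (Polynomial.X - Polynomial.C
    (algebraMap (MvPolynomial (Fin n) ℚ) (Kf n) (MvPolynomial.X j)))

/-- The GM-MDS condition: for every nonempty `I ⊆ [m]`,
`k - |⋂_{i∈I} S_i| ≥ ∑_{i∈I} (k - |S_i|)`. -/
def GMCond (m n k : ℕ) (S : Fin m → Finset (Fin n)) : Prop :=
  ∀ I : Finset (Fin m), ∀ hI : I.Nonempty,
    (k : ℤ) - ((I.inf' hI S).card : ℤ) ≥ ∑ i ∈ I, ((k : ℤ) - ((S i).card : ℤ))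

/-- A counterexample with parameters `(m, n, k)`: sets `S₁,…,S_m ⊆ [n]` with `m ≥ 2`,
`|S_i| ≤ k - 1`, `∑ |S_i| = (m-1)·k`, satisfying the GM-MDS condition, for which there
exist polynomials `q₁,…,q_m ∈ K[x]`, not all zero, with `deg q_i ≤ k-1-|S_i|` and
`∑ q_i · p_{S_i} = 0`. -/
def IsCounterexample (m n k : ℕ) (S : Fin m → Finset (Fin n)) : Prop :=
  2 ≤ m ∧ (∀ i, ((S i).card : ℤ) ≤ (k : ℤ) - 1) ∧
    (∑ i, (S i).card = (m - 1) * k) ∧ GMCond m n k S ∧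
    ∃ q : Fin m → Polynomial (Kf n),
      (∃ i, q i ≠ 0) ∧
      (∀ i, q i ≠ 0 → ((q i).natDegree : ℤ) ≤ (k : ℤ) - 1 - ((S i).card : ℤ)) ∧
      ∑ i, q i * pS (S i) = 0

/-- A minimal counterexample: one whose parameter triple `(m, n, k)` is lexicographically
least among the parameter triples of all counterexamples. -/
def IsMinimalCounterexample (m n k : ℕ) (S : Fin m → Finset (Fin n)) : Prop :=
  IsCounterexample m n k S ∧
    ∀ (m' n' k' : ℕ) (S' : Fin m' → Finset (Fin n')), IsCounterexample m' n' k' S' →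
      m < m' ∨ (m = m' ∧ (n < n' ∨ (n = n' ∧ k ≤ k')))

/-- `Q_ℓ = {t ∈ [m] : ℓ ∈ S_t}`. -/
def Q {m n : ℕ} (S : Fin m → Finset (Fin n)) (ℓ : Fin n) : Finset (Fin m) :=
  Finset.univ.filter (fun t => ℓ ∈ S t)

/-!
Suppose `I` violates the strict inequality. The GM-MDS condition then holds with equality on `I`,
and with `T = ⋂_{i∈I} S_i` the relation splits as `∑_{i∈I} q_i p_{S_i} = p_T h`, where
`h = ∑_{i∈I} q_i p_{S_i \ T}` has degree at most `k - 1 - |T|`. If every `q_i` with `i ∉ I`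
vanishes, then `h = 0` and `(S_i \ T)_{i∈I}` with parameter `k - |T|` is a counterexample with
`|I| < m` sets. Otherwise `(S_i)_{i∉I}` together with `T`, carrying the coefficient `h`, is a
counterexample with `m - |I| + 1 < m` sets; equality on `I` is exactly what keeps the GM-MDS
condition and the size count of the merged family. Either way minimality of `m` is contradicted.
-/

open Finset Polynomial Function

section Families

variable {ι κ : Type*} {n : ℕ}

def GMCondOn (k : ℕ) (S : ι → Finset (Fin n)) : Prop :=
  ∀ J : Finset ι, ∀ hJ : J.Nonempty,
    (k : ℤ) - ((J.inf' hJ S).card : ℤ) ≥ ∑ i ∈ J, ((k : ℤ) - ((S i).card : ℤ))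

/-- `IsCounterexample` for a family indexed by an arbitrary finite type, so that subfamilies and
merged families need no renumbering. -/
def IsCounterexampleFamily [Fintype ι] (k : ℕ) (S : ι → Finset (Fin n)) : Prop :=
  2 ≤ Fintype.card ι ∧ (∀ i, ((S i).card : ℤ) ≤ (k : ℤ) - 1) ∧
    (∑ i, (S i).card = (Fintype.card ι - 1) * k) ∧ GMCondOn k S ∧
    ∃ q : ι → Polynomial (Kf n),
      (∃ i, q i ≠ 0) ∧
      (∀ i, q i ≠ 0 → ((q i).natDegree : ℤ) ≤ (k : ℤ) - 1 - ((S i).card : ℤ)) ∧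
      ∑ i, q i * pS (S i) = 0

theorem isCounterexample_iff_family {m k : ℕ} {S : Fin m → Finset (Fin n)} :
    IsCounterexample m n k S ↔ IsCounterexampleFamily k S := by
  rw [IsCounterexampleFamily, Fintype.card_fin]
  rfl

/-- Tightness on each block turns the sum over a union of blocks into a sum over the merged sets. -/
theorem GMCondOn.inf'_blocks [DecidableEq ι] {k : ℕ} {S : ι → Finset (Fin n)}
    (hS : GMCondOn k S) (g : κ → Finset ι) (hg : ∀ o, (g o).Nonempty)
    (hdisj : Pairwise (Disjoint on g))
    (htight : ∀ o, (k : ℤ) - ((g o).inf' (hg o) S).card = ∑ i ∈ g o, ((k : ℤ) - (S i).card)) :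
    GMCondOn k (fun o => (g o).inf' (hg o) S) := by
  intro J hJ
  have hsum : ∑ o ∈ J, ((k : ℤ) - ((g o).inf' (hg o) S).card)
      = ∑ i ∈ J.biUnion g, ((k : ℤ) - (S i).card) := by
    rw [sum_biUnion (hdisj.set_pairwise _)]
    exact sum_congr rfl fun o _ => htight o
  rw [hsum, ← inf'_biUnion S hJ hg]
  exact hS _ _

theorem GMCondOn.comp_injective {k : ℕ} {S : ι → Finset (Fin n)} (hS : GMCondOn k S)
    {f : κ → ι} (hf : Injective f) : GMCondOn k (fun o => S (f o)) := by
  classical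
  have := hS.inf'_blocks (fun o => {f o}) (fun _ => singleton_nonempty _)
    (fun a b hab => disjoint_singleton.mpr (hf.ne hab)) (fun o => by simp)
  simpa only [inf'_singleton] using this

theorem GMCondOn.sdiff {k : ℕ} {S : ι → Finset (Fin n)} (hS : GMCondOn k S) {T : Finset (Fin n)}
    (hT : ∀ i, T ⊆ S i) (hTk : T.card ≤ k) : GMCondOn (k - T.card) (fun i => S i \ T) := by
  intro J hJ
  have hinf : J.inf' hJ (fun i => S i \ T) = J.inf' hJ S \ T := by
    ext x
    simp only [mem_inf', mem_sdiff]
    exact ⟨fun h => ⟨fun i hi => (h i hi).1, (h _ hJ.choose_spec).2⟩,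
      fun h i hi => ⟨h.1 i hi, h.2⟩⟩
  have hTJ : T ⊆ J.inf' hJ S := le_inf' _ _ fun i _ => hT i
  rw [hinf, card_sdiff_of_subset hTJ, Nat.cast_sub hTk, Nat.cast_sub (card_le_card hTJ)]
  simp_rw [card_sdiff_of_subset (hT _), Nat.cast_sub (card_le_card (hT _))]
  simpa using hS J hJ

theorem IsCounterexampleFamily.comp_equiv [Fintype ι] [Fintype κ] {k : ℕ}
    {S : ι → Finset (Fin n)} (h : IsCounterexampleFamily k S) (e : κ ≃ ι) :
    IsCounterexampleFamily k (fun o => S (e o)) := by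
  obtain ⟨hcard, hsize, hsum, hGM, q, ⟨i, hi⟩, hdeg, hrel⟩ := h
  refine ⟨by rwa [Fintype.card_congr e], fun o => hsize _, ?_, hGM.comp_injective e.injective,
    fun o => q (e o), ⟨e.symm i, by simpa using hi⟩, fun o => hdeg _, ?_⟩
  · rw [Fintype.card_congr e, ← hsum]
    exact e.sum_comp fun i => (S i).card
  · rw [← hrel]
    exact e.sum_comp fun i => q i * pS (S i)

theorem IsMinimalCounterexample.le_card {m k : ℕ} {S : Fin m → Finset (Fin n)}
    (hmin : IsMinimalCounterexample m n k S) [Fintype ι] {n' k' : ℕ}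
    {S' : ι → Finset (Fin n')} (h : IsCounterexampleFamily k' S') : m ≤ Fintype.card ι := by
  have := hmin.2 _ _ _ _ (isCounterexample_iff_family.mpr (h.comp_equiv (Fintype.equivFin ι).symm))
  omega

end Families

theorem pS_monic {n : ℕ} (S : Finset (Fin n)) : (pS S).Monic :=
  monic_prod_of_monic _ _ fun _ _ => monic_X_sub_C _

theorem pS_ne_zero {n : ℕ} (S : Finset (Fin n)) : pS S ≠ 0 := (pS_monic S).ne_zero

theorem natDegree_pS {n : ℕ} (S : Finset (Fin n)) : (pS S).natDegree = S.card := by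
  rw [pS, natDegree_prod _ _ fun _ _ => X_sub_C_ne_zero _]
  simp

theorem pS_eq_mul_sdiff {n : ℕ} {T S : Finset (Fin n)} (h : T ⊆ S) :
    pS S = pS T * pS (S \ T) := by
  rw [pS, pS, pS, ← prod_union disjoint_sdiff, union_sdiff_of_subset h]

section Relations

variable {ι : Type*} {n k : ℕ} {S : ι → Finset (Fin n)} {I : Finset ι} {T : Finset (Fin n)}

theorem sum_mul_pS_eq_pS_mul_sum (hT : ∀ i ∈ I, T ⊆ S i) (q : ι → (Kf n)[X]) :
    ∑ i ∈ I, q i * pS (S i) = pS T * ∑ i ∈ I, q i * pS (S i \ T) := by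
  rw [mul_sum]
  refine sum_congr rfl fun i hi => ?_
  rw [pS_eq_mul_sdiff (hT i hi)]
  ring

theorem natDegree_sum_mul_pS_sdiff_le (hT : ∀ i ∈ I, T ⊆ S i) (hTk : (T.card : ℤ) ≤ k - 1)
    {q : ι → (Kf n)[X]}
    (hdeg : ∀ i, q i ≠ 0 → ((q i).natDegree : ℤ) ≤ k - 1 - (S i).card) :
    ((∑ i ∈ I, q i * pS (S i \ T)).natDegree : ℤ) ≤ k - 1 - T.card := by
  suffices (∑ i ∈ I, q i * pS (S i \ T)).natDegree ≤ k - 1 - T.card by omega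
  refine natDegree_sum_le_of_forall_le _ _ fun i hi => ?_
  by_cases hqi : q i = 0
  · simp [hqi]
  refine natDegree_mul_le.trans ?_
  have := hdeg i hqi
  have := card_le_card (hT i hi)
  rw [natDegree_pS, card_sdiff_of_subset (hT i hi)]
  omega

end Relations

section TightBlock

variable {ι : Type*} {n k : ℕ} {S : ι → Finset (Fin n)} {I : Finset ι}

theorem sum_card_eq_of_tight (hI : I.Nonempty)
    (htight : (k : ℤ) - (I.inf' hI S).card = ∑ i ∈ I, ((k : ℤ) - (S i).card)) :
    ∑ i ∈ I, ((S i).card : ℤ) = (I.card - 1) * k + (I.inf' hI S).card := by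
  rw [sum_sub_distrib, sum_const, nsmul_eq_mul] at htight
  linarith

theorem isCounterexampleFamily_restrict [Fintype ι] (hI : I.Nonempty) (hI2 : 2 ≤ I.card)
    (hsize : ∀ i, ((S i).card : ℤ) ≤ k - 1) (hGM : GMCondOn k S)
    (htight : (k : ℤ) - (I.inf' hI S).card = ∑ i ∈ I, ((k : ℤ) - (S i).card))
    {q : ι → (Kf n)[X]} (hq : ∃ i, q i ≠ 0)
    (hdeg : ∀ i, q i ≠ 0 → ((q i).natDegree : ℤ) ≤ k - 1 - (S i).card)
    (hrel : ∑ i, q i * pS (S i) = 0) (hout : ∀ i ∉ I, q i = 0) :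
    IsCounterexampleFamily (k - (I.inf' hI S).card) (fun i : I => S i \ I.inf' hI S) := by
  have hsumI := sum_card_eq_of_tight hI htight
  set T := I.inf' hI S
  have hT : ∀ i ∈ I, T ⊆ S i := fun i hi => inf'_le S hi
  have hcard : ∀ i ∈ I, ((S i \ T).card : ℤ) = (S i).card - T.card := fun i hi => by
    rw [card_sdiff_of_subset (hT i hi), Nat.cast_sub (card_le_card (hT i hi))]
  have hTk : (T.card : ℤ) ≤ k - 1 :=
    (Nat.cast_le.mpr (card_le_card (hT _ hI.choose_spec))).trans (hsize _)
  have hk : ((k - T.card : ℕ) : ℤ) = k - T.card := by omega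
  refine ⟨by simpa using hI2, fun i => ?_, ?_, (hGM.comp_injective Subtype.val_injective).sdiff
    (fun i => hT i i.2) (by omega), fun i => q i, ?_, fun i hi => ?_, ?_⟩
  · have := hsize i
    rw [hcard i i.2, hk]
    omega
  · rw [← Nat.cast_inj (R := ℤ), Nat.cast_mul, hk, Fintype.card_coe,
      Nat.cast_sub (hI2.trans' one_le_two), Nat.cast_sum,
      sum_coe_sort I fun i => ((S i \ T).card : ℤ), sum_congr rfl hcard, sum_sub_distrib,
      hsumI, sum_const, nsmul_eq_mul]
    ring
  · obtain ⟨i, hi⟩ := hq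
    exact ⟨⟨i, by_contra fun h => hi (hout i h)⟩, hi⟩
  · have := hdeg i hi
    dsimp only
    rw [hcard i i.2, hk]
    omega
  · have hrelI : ∑ i ∈ I, q i * pS (S i) = 0 := by
      rw [← hrel]
      exact sum_subset (subset_univ I) fun i _ hi => by rw [hout i hi, zero_mul]
    rw [sum_mul_pS_eq_pS_mul_sum hT q] at hrelI
    rw [sum_coe_sort I fun i => q i * pS (S i \ T)]
    exact (mul_eq_zero.mp hrelI).resolve_left (pS_ne_zero T)

theorem isCounterexampleFamily_merge [Fintype ι] [DecidableEq ι] (hI : I.Nonempty)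
    (hIc : I.card < Fintype.card ι) (hsize : ∀ i, ((S i).card : ℤ) ≤ k - 1)
    (hsum : ∑ i, (S i).card = (Fintype.card ι - 1) * k) (hGM : GMCondOn k S)
    (htight : (k : ℤ) - (I.inf' hI S).card = ∑ i ∈ I, ((k : ℤ) - (S i).card))
    {q : ι → (Kf n)[X]} (hdeg : ∀ i, q i ≠ 0 → ((q i).natDegree : ℤ) ≤ k - 1 - (S i).card)
    (hrel : ∑ i, q i * pS (S i) = 0) (hout : ∃ i ∉ I, q i ≠ 0) :
    IsCounterexampleFamily k (fun o : Option ↥Iᶜ => o.elim (I.inf' hI S) fun i => S i) := by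
  have hsumI := sum_card_eq_of_tight hI htight
  set T := I.inf' hI S
  have hT : ∀ i ∈ I, T ⊆ S i := fun i hi => inf'_le S hi
  have hTk : (T.card : ℤ) ≤ k - 1 :=
    (Nat.cast_le.mpr (card_le_card (hT _ hI.choose_spec))).trans (hsize _)
  have hcardc : Fintype.card (Option ↥Iᶜ) = Fintype.card ι - I.card + 1 := by
    rw [Fintype.card_option, Fintype.card_coe, card_compl]
  refine ⟨by omega, ?_, ?_, ?_, fun o => o.elim (∑ i ∈ I, q i * pS (S i \ T)) fun i => q i,
    ?_, ?_, ?_⟩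
  · rintro (_ | i)
    exacts [hTk, hsize i]
  · have hsplit := sum_add_sum_compl I fun i => (S i).card
    rw [hsum] at hsplit
    rw [Fintype.sum_option, hcardc, Nat.add_sub_cancel]
    dsimp only [Option.elim]
    rw [sum_coe_sort Iᶜ fun i => (S i).card]
    zify [hIc.le, (by omega : 1 ≤ Fintype.card ι)] at hsplit ⊢
    linarith
  · let g : Option ↥Iᶜ → Finset ι := fun o => o.elim I fun i => {i.1}
    have hg : ∀ o, (g o).Nonempty := by
      rintro (_ | i)
      exacts [hI, singleton_nonempty _]
    have hdisj : Pairwise (Disjoint on g) := by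
      rintro (_ | a) (_ | b) hab
      · exact absurd rfl hab
      · exact disjoint_singleton_right.mpr (mem_compl.mp b.2)
      · exact disjoint_singleton_left.mpr (mem_compl.mp a.2)
      · exact disjoint_singleton.mpr fun h => hab (congrArg some (Subtype.ext h))
    have hblocks := hGM.inf'_blocks g hg hdisj (by rintro (_ | i); exacts [htight, by simp [g]])
    convert hblocks using 2 with o
    rcases o with _ | i
    exacts [rfl, (inf'_singleton S).symm]
  · obtain ⟨i, hiI, hi⟩ := hout
    exact ⟨some ⟨i, mem_compl.mpr hiI⟩, hi⟩
  · rintro (_ | i) hi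
    exacts [natDegree_sum_mul_pS_sdiff_le hT hTk hdeg, hdeg i hi]
  · rw [Fintype.sum_option]
    dsimp only [Option.elim]
    rw [sum_coe_sort Iᶜ fun i => q i * pS (S i), mul_comm, ← sum_mul_pS_eq_pS_mul_sum hT,
      sum_add_sum_compl, hrel]

end TightBlock

/-- **Lemma 2 (i).** For a minimal counterexample, every `I ⊆ [m]` with
`2 ≤ |I| ≤ m - 1` satisfies `k - 1 - |⋂_{i∈I} S_i| ≥ ∑_{i∈I} (k - |S_i|)`. -/
theorem minimal_counterexample_strict (m n k : ℕ) (S : Fin m → Finset (Fin n))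
    (hmin : IsMinimalCounterexample m n k S) :
    ∀ I : Finset (Fin m), ∀ hI : I.Nonempty, 2 ≤ I.card → I.card ≤ m - 1 →
      (k : ℤ) - 1 - ((I.inf' hI S).card : ℤ) ≥ ∑ i ∈ I, ((k : ℤ) - ((S i).card : ℤ)) := by
  intro I hI hI2 hIm
  obtain ⟨-, hsize, hsum, hGM, q, hq, hdeg, hrel⟩ := isCounterexample_iff_family.mp hmin.1
  by_contra hlt
  have htight := le_antisymm (by linarith) (hGM I hI)
  by_cases hout : ∀ i ∉ I, q i = 0
  · have := hmin.le_card
      (isCounterexampleFamily_restrict hI hI2 hsize hGM htight hq hdeg hrel hout)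
    rw [Fintype.card_coe] at this
    omega
  · push Not at hout
    have := hmin.le_card (isCounterexampleFamily_merge hI
      (by rw [Fintype.card_fin]; omega) hsize hsum hGM htight hdeg hrel hout)
    rw [Fintype.card_option, Fintype.card_coe, card_compl, Fintype.card_fin] at this
    omega
end

section
/- If (S_1,…,S_m) is a counterexample with parameters (m,n,k) that is minimal in the lexicographic order on (m,n,k), then for all i ≠ j in {1,…,n}: if Q_i ∩ Q_j = ∅ then Q_j = {1,…,m} \ Q_i, where Q_ℓ = {t ∈ {1,…,m} : ℓ ∈ S_t}. -/
open Polynomial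

namespace GMaux

variable {ι A B : Type*} [CommRing A] [CommRing B]

noncomputable def PX (c : ι → A) (S : Finset ι) : A[X] :=
  ∏ j ∈ S, (Polynomial.X - Polynomial.C (c j))

theorem monic_PX (c : ι → A) (S : Finset ι) : (PX c S).Monic :=
  monic_prod_of_monic _ _ fun _ _ => monic_X_sub_C _

theorem natDegree_PX [Nontrivial A] (c : ι → A) (S : Finset ι) :
    (PX c S).natDegree = S.card := by
  rw [PX, natDegree_prod_of_monic _ _ fun _ _ => monic_X_sub_C _]
  simp

theorem PX_ne_zero [Nontrivial A] (c : ι → A) (S : Finset ι) : PX c S ≠ 0 :=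
  (monic_PX c S).ne_zero

theorem map_PX (f : A →+* B) (c : ι → A) (S : Finset ι) :
    (PX c S).map f = PX (fun j => f (c j)) S := by
  simp [PX, Polynomial.map_prod]

theorem PX_sdiff [DecidableEq ι] (c : ι → A) {Z S : Finset ι} (h : Z ⊆ S) :
    PX c S = PX c Z * PX c (S \ Z) := by
  rw [PX, PX, PX, mul_comm, Finset.prod_sdiff h]

theorem PX_image [DecidableEq ι] {κ : Type*} [DecidableEq κ] (c : κ → A) (v : ι → κ)
    {S : Finset ι} (hv : Set.InjOn v S) :
    PX c (S.image v) = PX (fun j => c (v j)) S := by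
  rw [PX, PX, Finset.prod_image (fun x hx y hy h => hv hx hy h)]

theorem mem_finset_inf {β γ : Type*} [Fintype γ] [DecidableEq γ] (s : Finset β)
    (f : β → Finset γ) (x : γ) : x ∈ s.inf f ↔ ∀ i ∈ s, x ∈ f i := by
  classical
  induction s using Finset.cons_induction with
  | empty => simp [Finset.top_eq_univ]
  | cons a s ha ih => simp [Finset.inf_cons, ih]

theorem pS_eq_PX {n : ℕ} (S : Finset (Fin n)) :
    pS S = PX (fun j => algebraMap (MvPolynomial (Fin n) ℚ) (Kf n) (MvPolynomial.X j)) S :=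
  rfl

theorem pS_sdiff {n : ℕ} {Z S : Finset (Fin n)} (h : Z ⊆ S) :
    pS S = pS Z * pS (S \ Z) := PX_sdiff _ h

theorem pS_ne_zero {n : ℕ} (S : Finset (Fin n)) : pS S ≠ 0 := PX_ne_zero _ S

theorem natDegree_pS {n : ℕ} (S : Finset (Fin n)) : (pS S).natDegree = S.card :=
  natDegree_PX _ S

/-- In a minimal counterexample, no proper subfamily of size `≥ 2` can be tight
for the GM-MDS condition. -/
theorem no_tight {m n k : ℕ} {S : Fin m → Finset (Fin n)}
    (hmin : IsMinimalCounterexample m n k S) (I : Finset (Fin m)) (hI : I.Nonempty)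
    (h2 : 2 ≤ I.card) (hne : I ≠ Finset.univ)
    (htight : (k : ℤ) - ((I.inf' hI S).card : ℤ) = ∑ t ∈ I, ((k : ℤ) - ((S t).card : ℤ))) :
    False := by
  classical
  obtain ⟨⟨hm2, hcard, hsum, hGM, q, ⟨ts, hts⟩, hdeg, hrel⟩, hminim⟩ := hmin
  set Z : Finset (Fin n) := I.inf' hI S with hZdef
  set z : ℕ := Z.card with hzdef
  have hZsub : ∀ t ∈ I, Z ⊆ S t := fun t ht => Finset.inf'_le S ht
  have hIlt : I.card < m := by
    have h := Finset.card_lt_card (lt_of_le_of_ne (Finset.subset_univ I)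
      (by simpa using hne))
    simpa using h
  -- numeric facts
  have hterm : ∀ t, (1 : ℤ) ≤ (k : ℤ) - ((S t).card : ℤ) := fun t => by
    have := hcard t; omega
  have hsumge : (I.card : ℤ) ≤ ∑ t ∈ I, ((k : ℤ) - ((S t).card : ℤ)) := by
    calc (I.card : ℤ) = ∑ _t ∈ I, (1 : ℤ) := by simp
    _ ≤ _ := Finset.sum_le_sum fun t _ => hterm t
  have hzk2 : (z : ℤ) ≤ (k : ℤ) - 2 := by
    have h3 : (2 : ℤ) ≤ (I.card : ℤ) := by exact_mod_cast h2
    omega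
  have hzk : z ≤ k := by
    have := hzk2; omega
  have hsumIZ : ∑ t ∈ I, ((S t).card : ℤ) = (I.card : ℤ) * k - ((k : ℤ) - z) := by
    have h4 : ∑ t ∈ I, ((k : ℤ) - ((S t).card : ℤ))
        = (I.card : ℤ) * k - ∑ t ∈ I, ((S t).card : ℤ) := by
      rw [Finset.sum_sub_distrib]
      simp [mul_comm]
    rw [h4] at htight
    omega
  have hsumU : ∑ t : Fin m, ((S t).card : ℤ) = ((m : ℤ) - 1) * k := by
    have := congrArg (fun x : ℕ => (x : ℤ)) hsum
    push_cast [Nat.cast_sub (by omega : 1 ≤ m)] at this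
    simpa using this
  -- the split relation
  set r : Polynomial (Kf n) := ∑ t ∈ I, q t * pS (S t \ Z) with hrdef
  have hkey : r * pS Z + ∑ t ∈ Finset.univ \ I, q t * pS (S t) = 0 := by
    have h1 : r * pS Z = ∑ t ∈ I, q t * pS (S t) := by
      rw [hrdef, Finset.sum_mul]
      refine Finset.sum_congr rfl fun t ht => ?_
      rw [pS_sdiff (hZsub t ht)]; ring
    rw [h1, add_comm, Finset.sum_sdiff (Finset.subset_univ I), hrel]
  have hk1 : 1 ≤ k := by have := hcard ts; omega
  by_cases hcase : r = 0 ∧ ∀ t ∈ Finset.univ \ I, q t = 0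
  · -- strip `Z` off the sets in `I`: smaller counterexample with `m'' = I.card`
    obtain ⟨hr0, hq0⟩ := hcase
    set eI : Fin I.card ≃ {x // x ∈ I} := I.equivFin.symm with heI
    have htrans : ∀ {M : Type} [AddCommMonoid M] (f : Fin m → M),
        ∑ i, f (eI i) = ∑ t ∈ I, f t := by
      intro M _ f
      rw [← Finset.sum_coe_sort I f]
      exact Equiv.sum_comp eI (fun x : {x // x ∈ I} => f (x : Fin m))
    set T : Fin I.card → Finset (Fin n) := fun i2 => S (eI i2) \ Z with hTdef
    have hTcardZ : ∀ t ∈ I, (((S t \ Z).card : ℤ)) = ((S t).card : ℤ) - z := by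
      intro t ht
      rw [Finset.card_sdiff_of_subset (hZsub t ht),
        Nat.cast_sub (Finset.card_le_card (hZsub t ht))]
    have hts_mem : ts ∈ I := by
      by_contra h
      exact hts (hq0 ts (Finset.mem_sdiff.mpr ⟨Finset.mem_univ _, h⟩))
    have hkz : ((k - z : ℕ) : ℤ) = (k : ℤ) - z := by
      rw [Nat.cast_sub hzk]
    have CE : IsCounterexample I.card n (k - z) T := by
      refine ⟨h2, ?_, ?_, ?_, ?_⟩
      · intro i
        have h4 := hcard (eI i)
        have h5 := hTcardZ (eI i) (eI i).2
        show (((S (eI i) \ Z).card : ℤ)) ≤ ((k - z : ℕ) : ℤ) - 1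
        rw [h5, hkz]
        omega
      · -- sum condition
        have h6 : ∑ i : Fin I.card, ((T i).card : ℤ)
            = ∑ t ∈ I, (((S t \ Z).card : ℤ)) :=
          htrans (fun t => (((S t \ Z).card : ℤ)))
        have h6b : ∑ t ∈ I, (((S t \ Z).card : ℤ)) = ∑ t ∈ I, (((S t).card : ℤ) - z) :=
          Finset.sum_congr rfl hTcardZ
        have hIc1 : ((I.card - 1 : ℕ) : ℤ) = (I.card : ℤ) - 1 :=
          Nat.cast_sub (by omega)
        have hgoal : (∑ i : Fin I.card, ((T i).card : ℤ))
            = (((I.card - 1) * (k - z) : ℕ) : ℤ) := by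
          rw [h6, h6b, Finset.sum_sub_distrib, hsumIZ, Finset.sum_const, nsmul_eq_mul,
            Nat.cast_mul, hIc1, hkz]
          ring
        exact_mod_cast hgoal
      · -- GM-MDS condition
        intro J hJ
        set J' : Finset (Fin m) := J.image (fun i2 => ((eI i2 : {x // x ∈ I}) : Fin m))
          with hJ'def
        have hJ'ne : J'.Nonempty := hJ.image _
        have hJ'sub : J' ⊆ I := by
          intro t ht
          obtain ⟨i2, _, rfl⟩ := Finset.mem_image.mp ht
          exact (eI i2).2
        have hvinj : Function.Injective (fun i2 : Fin I.card => ((eI i2 : {x // x ∈ I}) : Fin m)) :=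
          fun x y h => eI.injective (Subtype.val_injective h)
        have hinf : J.inf' hJ T = (J'.inf' hJ'ne S) \ Z := by
          rw [Finset.inf'_eq_inf, Finset.inf'_eq_inf]
          ext x
          simp only [Finset.mem_sdiff, mem_finset_inf]
          constructor
          · intro h
            obtain ⟨i0, hi0⟩ := hJ
            refine ⟨fun t ht => ?_, (Finset.mem_sdiff.mp (h i0 hi0)).2⟩
            obtain ⟨i2, hi2, rfl⟩ := Finset.mem_image.mp ht
            exact (Finset.mem_sdiff.mp (h i2 hi2)).1
          · rintro ⟨h1, h2⟩ i2 hi2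
            exact Finset.mem_sdiff.mpr ⟨h1 _ (Finset.mem_image_of_mem _ hi2), h2⟩
        have hZJ' : Z ⊆ J'.inf' hJ'ne S :=
          Finset.le_inf' hJ'ne S fun t ht => hZsub t (hJ'sub ht)
        have hcardinf : (((J.inf' hJ T).card : ℤ)) = ((J'.inf' hJ'ne S).card : ℤ) - z := by
          rw [hinf, Finset.card_sdiff_of_subset hZJ', Nat.cast_sub (Finset.card_le_card hZJ')]
        have hrhs : ∑ i2 ∈ J, (((k - z : ℕ) : ℤ) - ((T i2).card : ℤ))
            = ∑ t ∈ J', ((k : ℤ) - ((S t).card : ℤ)) := by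
          rw [hJ'def, Finset.sum_image (fun x hx y hy h => hvinj h)]
          refine Finset.sum_congr rfl fun i2 hi2 => ?_
          rw [hTdef, hTcardZ _ (eI i2).2, hkz]
          ring
        have := hGM J' hJ'ne
        rw [ge_iff_le, hrhs, hcardinf, hkz]
        omega
      · -- the polynomial relation
        refine ⟨fun i2 => q (eI i2), ⟨eI.symm ⟨ts, hts_mem⟩, by simpa using hts⟩, ?_, ?_⟩
        · intro i2 hi2
          have hi2' : q (eI i2) ≠ 0 := hi2
          have h8 := hdeg (eI i2) hi2'
          have h9 := hTcardZ (eI i2) (eI i2).2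
          show (((q (eI i2)).natDegree : ℤ)) ≤ ((k - z : ℕ) : ℤ) - 1 - (((S (eI i2) \ Z).card : ℤ))
          rw [h9, hkz]
          omega
        · have h10 : ∑ i2 : Fin I.card, q (eI i2) * pS (T i2)
              = ∑ t ∈ I, q t * pS (S t \ Z) :=
            htrans (fun t => q t * pS (S t \ Z))
          rw [h10, ← hrdef, hr0]
    rcases hminim I.card n (k - z) T CE with h | ⟨h, _⟩ <;> omega
  · -- the collapsed counterexample with `m' = m - I.card + 1`
    rw [not_and_or] at hcase
    set J : Finset (Fin m) := Finset.univ \ I with hJdef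
    have hJne : J.Nonempty := by
      rw [hJdef, Finset.sdiff_nonempty]
      intro h
      exact hne (Finset.univ_subset_iff.mp h)
    set Jc : ℕ := J.card with hJcdef
    have hJc : Jc = m - I.card := by
      rw [hJcdef, hJdef, Finset.card_sdiff_of_subset (Finset.subset_univ I)]
      simp
    have hJc1 : 1 ≤ Jc := hJne.card_pos
    set eJ : Fin Jc ≃ {x // x ∈ J} := J.equivFin.symm with heJ
    have htransJ : ∀ {M : Type} [AddCommMonoid M] (f : Fin m → M),
        ∑ i, f (eJ i) = ∑ t ∈ J, f t := by
      intro M _ f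
      rw [← Finset.sum_coe_sort J f]
      exact Equiv.sum_comp eJ (fun x : {x // x ∈ J} => f (x : Fin m))
    set T : Fin (Jc + 1) → Finset (Fin n) := Fin.cases Z (fun i => S (eJ i)) with hTdef
    set qT : Fin (Jc + 1) → Polynomial (Kf n) := Fin.cases r (fun i => q (eJ i)) with hqTdef
    have hT0 : T 0 = Z := rfl
    have hTsucc : ∀ i : Fin Jc, T i.succ = S (eJ i) := fun i => rfl
    have hdegr : r ≠ 0 → (r.natDegree : ℤ) ≤ (k : ℤ) - 1 - z := by
      intro hr0
      have hre : r * pS Z = -∑ t ∈ J, q t * pS (S t) := by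
        rw [eq_neg_iff_add_eq_zero]; exact hkey
      have hnd1 : (r * pS Z).natDegree = r.natDegree + z := by
        rw [natDegree_mul hr0 (pS_ne_zero Z), natDegree_pS]
      have hnd2 : (∑ t ∈ J, q t * pS (S t)).natDegree ≤ k - 1 := by
        apply natDegree_sum_le_of_forall_le
        intro t _
        by_cases hq : q t = 0
        · simp [hq]
        · rw [natDegree_mul hq (pS_ne_zero _), natDegree_pS]
          have := hdeg t hq
          have := hcard t
          omega
      rw [hre, natDegree_neg] at hnd1
      have : r.natDegree + z ≤ k - 1 := hnd1 ▸ hnd2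
      omega
    have CE : IsCounterexample (Jc + 1) n k T := by
      refine ⟨by omega, ?_, ?_, ?_, ?_⟩
      · intro i
        induction i using Fin.cases with
        | zero => rw [hT0]; omega
        | succ i => rw [hTsucc]; exact hcard _
      · -- sum condition
        have h6 : ∑ i : Fin Jc, ((T i.succ).card : ℤ) = ∑ t ∈ J, ((S t).card : ℤ) :=
          htransJ (fun t => ((S t).card : ℤ))
        have h7 := Finset.sum_sdiff (Finset.subset_univ I)
          (f := fun t => ((S t).card : ℤ))
        rw [← hJdef] at h7
        have h9 : (Jc : ℤ) = (m : ℤ) - I.card := by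
          rw [hJc, Nat.cast_sub (le_of_lt hIlt)]
        have h10 : ∑ t ∈ J, ((S t).card : ℤ)
            = ((m : ℤ) - 1) * k - ((I.card : ℤ) * k - ((k : ℤ) - z)) := by
          rw [← hsumIZ, ← hsumU, ← h7]; ring
        have hgoal : (∑ i : Fin (Jc + 1), ((T i).card : ℤ)) = (((Jc + 1 - 1) * k : ℕ) : ℤ) := by
          rw [Fin.sum_univ_succ, hT0, h6, h10, Nat.add_sub_cancel, Nat.cast_mul, h9]
          ring
        exact_mod_cast hgoal
      · -- GM-MDS condition
        intro J1 hJ1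
        set u : Fin (Jc + 1) → Finset (Fin m) :=
          Fin.cases I (fun i => {((eJ i : {x // x ∈ J}) : Fin m)}) with hudef
        have hu0 : u 0 = I := rfl
        have husucc : ∀ i : Fin Jc, u i.succ = {((eJ i : {x // x ∈ J}) : Fin m)} :=
          fun i => rfl
        have hune : ∀ i, (u i).Nonempty := by
          intro i
          induction i using Fin.cases with
          | zero => exact hI
          | succ i => exact Finset.singleton_nonempty _
        set B : Finset (Fin m) := J1.biUnion u with hBdef
        have hBne : B.Nonempty := by
          obtain ⟨i0, hi0⟩ := hJ1
          obtain ⟨x, hx⟩ := hune i0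
          exact ⟨x, Finset.mem_biUnion.mpr ⟨i0, hi0, hx⟩⟩
        have hTu : ∀ i, T i = (u i).inf S := by
          intro i
          induction i using Fin.cases with
          | zero => rw [hT0, hu0, ← Finset.inf'_eq_inf hI]
          | succ i => rw [hTsucc, husucc, Finset.inf_singleton]
        have hinf : J1.inf' hJ1 T = B.inf' hBne S := by
          rw [Finset.inf'_eq_inf, Finset.inf'_eq_inf, hBdef, Finset.inf_biUnion]
          exact Finset.inf_congr rfl fun i _ => hTu i
        have hdisj : (J1 : Set (Fin (Jc + 1))).PairwiseDisjoint u := by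
          intro i1 _ i2 _ hne12
          simp only [Function.onFun]
          rcases Fin.eq_zero_or_eq_succ i1 with rfl | ⟨a1, rfl⟩ <;>
            rcases Fin.eq_zero_or_eq_succ i2 with rfl | ⟨a2, rfl⟩
          · exact absurd rfl hne12
          · rw [Finset.disjoint_left]
            intro x hx hx2
            rw [hu0] at hx
            rw [husucc, Finset.mem_singleton] at hx2
            subst hx2
            exact (Finset.mem_sdiff.mp (eJ a2).2).2 hx
          · rw [Finset.disjoint_left]
            intro x hx hx2
            rw [hu0] at hx2
            rw [husucc, Finset.mem_singleton] at hx
            subst hx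
            exact (Finset.mem_sdiff.mp (eJ a1).2).2 hx2
          · rw [husucc, husucc, Finset.disjoint_singleton]
            intro h
            exact hne12 (congrArg Fin.succ (eJ.injective (Subtype.val_injective h)))
        have hsum2 : ∑ i ∈ J1, ((k : ℤ) - ((T i).card : ℤ))
            = ∑ t ∈ B, ((k : ℤ) - ((S t).card : ℤ)) := by
          rw [hBdef, Finset.sum_biUnion hdisj]
          refine Finset.sum_congr rfl fun i hi => ?_
          induction i using Fin.cases with
          | zero => rw [hu0, hT0, ← htight]
          | succ i => rw [husucc, Finset.sum_singleton, hTsucc]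
        rw [ge_iff_le, hsum2, hinf]
        exact hGM B hBne
      · -- the polynomial relation
        refine ⟨qT, ?_, ?_, ?_⟩
        · rcases hcase with hr0 | hq0
          · exact ⟨0, hr0⟩
          · push_neg at hq0
            obtain ⟨t, ht, hqt⟩ := hq0
            refine ⟨(eJ.symm ⟨t, ht⟩).succ, ?_⟩
            have : qT (eJ.symm ⟨t, ht⟩).succ = q t := by
              rw [hqTdef]
              simp
            rw [this]
            exact hqt
        · intro i hi
          induction i using Fin.cases with
          | zero =>
            have hr0 : r ≠ 0 := hi
            rw [hT0]
            have := hdegr hr0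
            exact this
          | succ i =>
            rw [hTsucc]
            exact hdeg _ hi
        · rw [Fin.sum_univ_succ]
          have h11 : ∑ i : Fin Jc, qT i.succ * pS (T i.succ)
              = ∑ t ∈ J, q t * pS (S t) := by
            refine Eq.trans ?_ (htransJ (fun t => q t * pS (S t)))
            exact Finset.sum_congr rfl fun i _ => rfl
          have h12 : qT 0 = r := rfl
          rw [h11, h12, hT0]
          exact hkey
    rcases hminim (Jc + 1) n k T CE with h | ⟨h, _⟩ <;> omega


open MvPolynomial in
theorem dvd_sub_rename {σ F : Type*} [CommRing F] (a b : σ) (g : σ → σ)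
    (hg : ∀ x, (X a - X b : MvPolynomial σ F) ∣ (X x - X (g x)))
    (f : MvPolynomial σ F) : (X a - X b) ∣ (f - rename g f) := by
  induction f using MvPolynomial.induction_on with
  | C r => simp
  | add p q hp hq =>
    have h := dvd_add hp hq
    have heq : p - rename g p + (q - rename g q) = p + q - rename g (p + q) := by
      rw [map_add]; ring
    rwa [heq] at h
  | mul_X p s hp =>
    have h : p * X s - rename g (p * X s) =
        (p - rename g p) * X s + rename g p * (X s - X (g s)) := by
      rw [map_mul, rename_X]; ring
    rw [h]
    exact dvd_add (hp.mul_right _) ((hg s).mul_left _)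

open MvPolynomial in
theorem descend {σ F : Type*} [Field F] {m : ℕ} (a b : σ) (hab : a ≠ b) (g : σ → σ)
    (hg : ∀ x, (X a - X b : MvPolynomial σ F) ∣ (X x - X (g x)))
    (S : Fin m → Finset σ) (bound : Fin m → ℤ) (c : MvPolynomial σ F)
    (Q : Fin m → (MvPolynomial σ F)[X]) (t₁ : Fin m) (d₁ : ℕ)
    (hc : (Q t₁).coeff d₁ = c) (hc0 : c ≠ 0)
    (hbound : ∀ t, Q t ≠ 0 → ((Q t).natDegree : ℤ) ≤ bound t)
    (hrel : ∑ t, Q t * PX MvPolynomial.X (S t) = 0) :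
    ∃ Q' : Fin m → (MvPolynomial σ F)[X],
      (∀ t, Q' t ≠ 0 → ((Q' t).natDegree : ℤ) ≤ bound t) ∧
      (∑ t, Q' t * PX MvPolynomial.X (S t) = 0) ∧
      ∃ t, (Q' t).map (rename g).toRingHom ≠ 0 := by
  have hwf : WellFounded (DvdNotUnit (α := MvPolynomial σ F)) := wellFounded_dvdNotUnit
  induction c using hwf.induction generalizing Q with
  | _ c IH =>
  by_cases hex : ∃ t, (Q t).map (rename g).toRingHom ≠ 0
  · exact ⟨Q, hbound, hrel, hex⟩
  push_neg at hex
  set π : MvPolynomial σ F := X a - X b with hπ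
  have hπ0 : π ≠ 0 := sub_ne_zero.mpr (fun h => hab (X_injective h))
  have hπu : ¬ IsUnit π := by
    intro h
    have h2 := h.map (MvPolynomial.eval (fun _ => (0 : F)))
    simp [hπ] at h2
  have hdvd : ∀ t, Polynomial.C π ∣ Q t := by
    intro t
    rw [Polynomial.C_dvd_iff_dvd_coeff]
    intro d
    have h1 : rename g ((Q t).coeff d) = 0 := by
      have h2 := congrArg (fun p => Polynomial.coeff p d) (hex t)
      simpa [Polynomial.coeff_map] using h2
    have h2 := dvd_sub_rename a b g hg ((Q t).coeff d)
    rwa [h1, sub_zero] at h2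
  choose Q' hQ' using hdvd
  have hC : (Polynomial.C π : (MvPolynomial σ F)[X]) ≠ 0 := by simpa using hπ0
  have hc1 : c = π * (Q' t₁).coeff d₁ := by rw [← hc, hQ' t₁, Polynomial.coeff_C_mul]
  have hc'0 : (Q' t₁).coeff d₁ ≠ 0 := fun h => hc0 (by rw [hc1, h, mul_zero])
  refine IH ((Q' t₁).coeff d₁) ⟨hc'0, π, hπu, by rw [hc1]; ring⟩ Q' rfl hc'0 ?_ ?_
  · intro t ht
    have hQt : Q t ≠ 0 := by rw [hQ' t]; exact mul_ne_zero hC ht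
    have h3 := hbound t hQt
    rwa [hQ' t, natDegree_C_mul hπ0] at h3
  · have h4 : Polynomial.C π * (∑ t, Q' t * PX MvPolynomial.X (S t)) = 0 := by
      rw [Finset.mul_sum, ← hrel]
      exact Finset.sum_congr rfl fun t _ => by rw [hQ' t, mul_assoc]
    exact (mul_eq_zero.mp h4).resolve_left hC

theorem exists_integer_relation {ι : Type*} (R : Type*) [CommRing R] [IsDomain R] {m : ℕ}
    {K : Type*} [Field K] [Algebra R K] [IsFractionRing R K]
    (c : ι → R) (S : Fin m → Finset ι)
    (q : Fin m → K[X]) (t₁ : Fin m) (ht₁ : q t₁ ≠ 0)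
    (hrel : ∑ t, q t * PX (fun j => algebraMap R K (c j)) (S t) = 0) :
    ∃ Q : Fin m → R[X], Q t₁ ≠ 0 ∧ (∀ t, (Q t).natDegree = (q t).natDegree) ∧
      (∀ t, q t = 0 → Q t = 0) ∧ ∑ t, Q t * PX c (S t) = 0 := by
  classical
  set f := algebraMap R K with hf
  have hfi : Function.Injective f := IsFractionRing.injective R K
  set N : ℕ := 1 + Finset.univ.sup (fun t => (q t).natDegree) with hN
  obtain ⟨b, hb⟩ := IsLocalization.exist_integer_multiples (nonZeroDivisors R)
    (Finset.univ : Finset (Fin m × Fin N)) (fun td => (q td.1).coeff td.2)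
  have hbb : f (b : R) ≠ 0 := by
    intro h
    exact nonZeroDivisors.coe_ne_zero b (hfi (by rw [h, map_zero]))
  have hlift : ∀ t, Polynomial.C (f (b : R)) * q t ∈ Polynomial.lifts f := by
    intro t
    rw [Polynomial.lifts_iff_coeff_lifts]
    intro d
    rcases lt_or_ge d N with hd | hd
    · obtain ⟨r, hr⟩ := hb (⟨t, ⟨d, hd⟩⟩ : Fin m × Fin N) (Finset.mem_univ _)
      refine ⟨r, ?_⟩
      rw [coeff_C_mul]
      rw [Algebra.smul_def] at hr
      exact hr
    · have hz : (q t).coeff d = 0 := by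
        apply coeff_eq_zero_of_natDegree_lt
        have h1 : (q t).natDegree ≤ Finset.univ.sup (fun t => (q t).natDegree) :=
          Finset.le_sup (f := fun t => (q t).natDegree) (Finset.mem_univ t)
        omega
      refine ⟨0, ?_⟩
      rw [map_zero, coeff_C_mul, hz, mul_zero]
  choose Q hQ using fun t => (Polynomial.mem_lifts _).mp (hlift t)
  have hC : Polynomial.C (f (b : R)) ≠ 0 := by simpa using hbb
  refine ⟨Q, ?_, ?_, ?_, ?_⟩
  · intro h
    apply ht₁
    have h2 := hQ t₁
    rw [h, Polynomial.map_zero] at h2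
    rcases mul_eq_zero.mp h2.symm with h' | h'
    · exact absurd h' hC
    · exact h'
  · intro t
    have h1 : (Q t).natDegree = (Polynomial.C (f (b : R)) * q t).natDegree := by
      rw [← hQ t, natDegree_map_eq_of_injective hfi]
    rw [h1, natDegree_C_mul hbb]
  · intro t h
    apply Polynomial.map_injective f hfi
    rw [hQ t, h, mul_zero, Polynomial.map_zero]
  · apply Polynomial.map_injective f hfi
    rw [Polynomial.map_zero]
    have h3 : ((∑ t, Q t * PX c (S t)).map f)
        = Polynomial.C (f (b : R)) * ∑ t, q t * PX (fun j => f (c j)) (S t) := by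
      rw [Polynomial.map_sum, Finset.mul_sum]
      refine Finset.sum_congr rfl fun t _ => ?_
      rw [Polynomial.map_mul, hQ t, map_PX, mul_assoc]
    rw [h3, hrel, mul_zero]


open MvPolynomial in
theorem no_merge {m n k : ℕ} {S : Fin m → Finset (Fin n)}
    (hmin : IsMinimalCounterexample m n k S) (a b : Fin n) (hab : a ≠ b)
    (hdisj : ∀ t, ¬(a ∈ S t ∧ b ∈ S t)) (t₀ : Fin m)
    (ha0 : a ∉ S t₀) (hb0 : b ∉ S t₀) : False := by
  classical
  obtain ⟨hm2, hcard, hsum, hGM, q, ⟨ts, hts⟩, hdeg, hrel⟩ := hmin.1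
  have hminim := hmin.2
  -- Step 1: clear denominators
  obtain ⟨Q0, hQ0ne, hQ0deg, hQ0zero, hQ0rel⟩ :=
    exists_integer_relation (MvPolynomial (Fin n) ℚ) MvPolynomial.X S q ts hts hrel
  set bound : Fin m → ℤ := fun t => (k : ℤ) - 1 - ((S t).card : ℤ) with hbounddef
  have hQ0bound : ∀ t, Q0 t ≠ 0 → ((Q0 t).natDegree : ℤ) ≤ bound t := by
    intro t ht
    have hqt : q t ≠ 0 := fun h => ht (hQ0zero t h)
    rw [hQ0deg t]
    exact hdeg t hqt
  -- Step 2: divide out powers of `X a - X b` so that the substitution is nonzero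
  set g : Fin n → Fin n := fun x => if x = b then a else x with hgdef
  have hgb : g b = a := by rw [hgdef]; simp
  have hga : g a = a := by rw [hgdef]; simp [hab]
  have hgnot : ∀ x, x ≠ b → g x = x := by intro x h; rw [hgdef]; simp [h]
  have hg : ∀ x, (MvPolynomial.X a - MvPolynomial.X b : MvPolynomial (Fin n) ℚ) ∣
      (MvPolynomial.X x - MvPolynomial.X (g x)) := by
    intro x
    rcases eq_or_ne x b with rfl | h
    · rw [hgb]
      exact ⟨-1, by ring⟩
    · rw [hgnot x h, sub_self]
      exact dvd_zero _
  have hd : ∃ d, (Q0 ts).coeff d ≠ 0 := by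
    by_contra h
    push_neg at h
    exact hQ0ne (Polynomial.ext fun d => by rw [h d, Polynomial.coeff_zero])
  obtain ⟨d₁, hd₁⟩ := hd
  obtain ⟨Q1, hQ1bound, hQ1rel, t₂, ht₂⟩ :=
    descend a b hab g hg S bound ((Q0 ts).coeff d₁) Q0 ts d₁ rfl hd₁ hQ0bound hQ0rel
  -- Step 3: the merged instance over `n - 1` variables
  have hn1 : 1 ≤ n := a.pos
  set nn := n - 1 with hnn
  have hcs : Fintype.card {x : Fin n // x ≠ b} = nn := by
    rw [hnn]
    simp [Fintype.card_subtype_compl]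
  set e : {x : Fin n // x ≠ b} ≃ Fin nn := Fintype.equivFinOfCardEq hcs with hedef
  set g' : Fin n → {x : Fin n // x ≠ b} :=
    fun x => if h : x = b then ⟨a, hab⟩ else ⟨x, h⟩ with hg'def
  set v : Fin n → Fin nn := fun x => e (g' x) with hvdef
  have hg'val : ∀ x, ((g' x : Fin n)) = g x := by
    intro x
    rcases eq_or_ne x b with rfl | h
    · have h1 : g' x = ⟨a, hab⟩ := dif_pos rfl
      rw [h1, hgb]
    · have h1 : g' x = ⟨x, h⟩ := dif_neg h
      rw [h1, hgnot x h]
  have hveq : ∀ x y, v x = v y ↔ g x = g y := by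
    intro x y
    constructor
    · intro h
      have h2 := e.injective h
      rw [← hg'val, ← hg'val, h2]
    · intro h
      have h2 : g' x = g' y := Subtype.val_injective (by rw [hg'val, hg'val, h])
      exact congrArg e h2
  have hginj : ∀ t, Set.InjOn g (S t) := by
    intro t x hx y hy hxy
    by_cases hxb : x = b <;> by_cases hyb : y = b
    · rw [hxb, hyb]
    · exfalso
      rw [hxb, hgb, hgnot y hyb] at hxy
      refine hdisj t ⟨?_, ?_⟩
      · rw [hxy]; exact hy
      · rw [← hxb]; exact hx
    · exfalso
      rw [hyb, hgb, hgnot x hxb] at hxy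
      refine hdisj t ⟨?_, ?_⟩
      · rw [← hxy]; exact hx
      · rw [← hyb]; exact hy
    · rwa [hgnot x hxb, hgnot y hyb] at hxy
  have hvinj : ∀ t, Set.InjOn v (S t) := fun t x hx y hy hxy =>
    hginj t hx hy ((hveq x y).mp hxy)
  set S2 : Fin m → Finset (Fin nn) := fun t => (S t).image v with hS2def
  have hcard2 : ∀ t, (S2 t).card = (S t).card := fun t =>
    Finset.card_image_of_injOn (hvinj t)
  -- Step 4: transport the relation
  set Ψ : MvPolynomial (Fin n) ℚ →+* MvPolynomial (Fin nn) ℚ := (rename v).toRingHom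
    with hΨdef
  have hkill : ∀ f : MvPolynomial (Fin n) ℚ, rename v f = 0 → rename g f = 0 := by
    intro f hf
    have h1 : rename (⇑e) (rename g' f) = 0 := by
      rw [rename_rename]
      exact hf
    have h2 : rename g' f = 0 := by
      apply rename_injective _ e.injective
      rw [h1, map_zero]
    have h3 : rename g f = rename (Subtype.val) (rename g' f) := by
      rw [rename_rename]
      exact (congrArg (fun u => rename u f) (funext fun x => hg'val x)).symm
    rw [h3, h2, map_zero]
  have hmapne : ((Q1 t₂).map Ψ) ≠ 0 := by
    intro h0
    apply ht₂
    refine Polynomial.ext fun d => ?_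
    rw [Polynomial.coeff_map, Polynomial.coeff_zero]
    apply hkill
    have h4 := congrArg (fun p => Polynomial.coeff p d) h0
    exact (by simpa [Polynomial.coeff_map] using h4 : Ψ ((Q1 t₂).coeff d) = 0)
  set q2 : Fin m → Polynomial (Kf nn) :=
    fun t => ((Q1 t).map Ψ).map (algebraMap (MvPolynomial (Fin nn) ℚ) (Kf nn)) with hq2def
  have halginj : Function.Injective (algebraMap (MvPolynomial (Fin nn) ℚ) (Kf nn)) :=
    IsFractionRing.injective _ _
  have hq2ne : q2 t₂ ≠ 0 := by
    intro h
    apply hmapne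
    apply Polynomial.map_injective _ halginj
    rw [Polynomial.map_zero]
    exact h
  have hq2deg : ∀ t, q2 t ≠ 0 → ((q2 t).natDegree : ℤ) ≤ (k : ℤ) - 1 - ((S2 t).card : ℤ) := by
    intro t ht
    have hQ1t : Q1 t ≠ 0 := by
      intro h
      apply ht
      rw [hq2def]
      simp [h]
    have h1 : (q2 t).natDegree ≤ (Q1 t).natDegree :=
      le_trans Polynomial.natDegree_map_le Polynomial.natDegree_map_le
    have h2 : ((Q1 t).natDegree : ℤ) ≤ (k : ℤ) - 1 - ((S t).card : ℤ) := hQ1bound t hQ1t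
    rw [hcard2 t]
    omega
  have hPXmap : ∀ t, (PX MvPolynomial.X (S t)).map Ψ = PX MvPolynomial.X (S2 t) := by
    intro t
    rw [map_PX, hS2def]
    rw [PX_image MvPolynomial.X v (hvinj t)]
    exact congrArg (fun c => PX c (S t)) (funext fun j => rename_X v j)
  have hq2rel : ∑ t, q2 t * pS (S2 t) = 0 := by
    have h2 : ∀ t, pS (S2 t)
        = (PX MvPolynomial.X (S2 t)).map (algebraMap (MvPolynomial (Fin nn) ℚ) (Kf nn)) := by
      intro t
      rw [map_PX]
      rfl
    calc ∑ t, q2 t * pS (S2 t)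
        = ((∑ t, Q1 t * PX MvPolynomial.X (S t)).map Ψ).map
            (algebraMap (MvPolynomial (Fin nn) ℚ) (Kf nn)) := by
          rw [Polynomial.map_sum, Polynomial.map_sum]
          refine Finset.sum_congr rfl fun t _ => ?_
          rw [Polynomial.map_mul, Polynomial.map_mul, hPXmap t, ← h2 t]
      _ = 0 := by rw [hQ1rel, Polynomial.map_zero, Polynomial.map_zero]
  -- Step 5: GM-MDS condition for the merged family
  have hGM2 : GMCond m nn k S2 := by
    intro I hI
    by_contra hlt
    rw [ge_iff_le, not_le] at hlt
    have hlt' : (k : ℤ) - ((I.inf' hI S2).card : ℤ)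
        < ∑ t ∈ I, ((k : ℤ) - ((S t).card : ℤ)) := by
      refine lt_of_lt_of_eq hlt (Finset.sum_congr rfl fun t _ => ?_)
      rw [hcard2 t]
    clear hlt
    have hGMI := hGM I hI
    set A := I.inf' hI S with hA
    set A2 := I.inf' hI S2 with hA2
    have hmemA2 : ∀ y, y ∈ A2 ↔ ∀ t ∈ I, y ∈ S2 t := by
      intro y
      rw [hA2, Finset.inf'_eq_inf]
      exact mem_finset_inf I S2 y
    have hmemA : ∀ x, x ∈ A ↔ ∀ t ∈ I, x ∈ S t := by
      intro x
      rw [hA, Finset.inf'_eq_inf]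
      exact mem_finset_inf I S x
    obtain ⟨t1, ht1⟩ := id hI
    have hvba : v b = v a := (hveq b a).mpr (by rw [hgb, hga])
    have hstruct : ∀ y ∈ A2, y ≠ v a → y ∈ A.image v := by
      intro y hy hyva
      have hy' := (hmemA2 y).mp hy
      have hx : ∀ t ∈ I, ∃ x, x ∈ S t ∧ v x = y := by
        intro t ht
        obtain ⟨x, hx1, hx2⟩ := Finset.mem_image.mp (hy' t ht)
        exact ⟨x, hx1, hx2⟩
      obtain ⟨x0, hx0S, hx0v⟩ := hx t1 ht1
      have hx0b : x0 ≠ b := by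
        rintro rfl
        exact hyva (by rw [← hx0v, hvba])
      have hgx0 : g x0 = x0 := hgnot x0 hx0b
      have hx0A : x0 ∈ A := by
        rw [hmemA]
        intro t ht
        obtain ⟨xt, hxtS, hxtv⟩ := hx t ht
        have hxg : g xt = g x0 := (hveq xt x0).mp (by rw [hx0v, hxtv])
        rcases eq_or_ne xt b with rfl | hxtb
        · exact absurd (by rw [← hxtv]; exact hvba) hyva
        · have h5 : xt = x0 := by rw [← hgnot xt hxtb, hxg, hgx0]
          rwa [h5] at hxtS
      rw [← hx0v]
      exact Finset.mem_image_of_mem v hx0A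
    have hcard1 : A2.card ≤ A.card + 1 := by
      have hsub : A2 ⊆ insert (v a) (A.image v) := by
        intro y hy
        rcases eq_or_ne y (v a) with rfl | h
        · exact Finset.mem_insert_self _ _
        · exact Finset.mem_insert_of_mem (hstruct y hy h)
      calc A2.card ≤ (insert (v a) (A.image v)).card := Finset.card_le_card hsub
        _ ≤ (A.image v).card + 1 := Finset.card_insert_le _ _
        _ ≤ A.card + 1 := by
            have h6 := Finset.card_image_le (s := A) (f := v)
            omega
    have htight : (k : ℤ) - (A.card : ℤ) = ∑ t ∈ I, ((k : ℤ) - ((S t).card : ℤ)) := by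
      have h1 : (A2.card : ℤ) ≤ (A.card : ℤ) + 1 := by exact_mod_cast hcard1
      have h2 : (k : ℤ) - (A2.card : ℤ) + 1 ≤ ∑ t ∈ I, ((k : ℤ) - ((S t).card : ℤ)) :=
        Int.add_one_le_iff.mpr hlt'
      have h3 : (k : ℤ) - (A.card : ℤ) ≤ (k : ℤ) - (A2.card : ℤ) + 1 := by omega
      exact le_antisymm (le_trans h3 h2) hGMI
    have hcover : ∀ t ∈ I, a ∈ S t ∨ b ∈ S t := by
      by_contra hcov
      push_neg at hcov
      obtain ⟨tq, htqI, htqa, htqb⟩ := hcov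
      have hsub : A2 ⊆ A.image v := by
        intro y hy
        apply hstruct y hy
        obtain ⟨x1, hx1S, hx1v⟩ := Finset.mem_image.mp ((hmemA2 y).mp hy tq htqI)
        intro hyva
        have h7 : g x1 = g a := (hveq x1 a).mp (by rw [hx1v, hyva])
        rw [hga] at h7
        rcases eq_or_ne x1 b with rfl | hx1b
        · exact htqb hx1S
        · rw [hgnot x1 hx1b] at h7
          exact htqa (h7 ▸ hx1S)
      have h4 : (A2.card : ℤ) ≤ (A.card : ℤ) := by
        have h8 := Finset.card_le_card hsub
        have h5 := Finset.card_image_le (s := A) (f := v)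
        exact_mod_cast le_trans h8 h5
      have h9 : ∑ t ∈ I, ((k : ℤ) - ((S t).card : ℤ)) ≤ (k : ℤ) - (A.card : ℤ) := hGMI
      have h10 : (k : ℤ) - (A2.card : ℤ) < ∑ t ∈ I, ((k : ℤ) - ((S t).card : ℤ)) := hlt'
      linarith
    have ht0I : t₀ ∉ I := by
      intro h
      rcases hcover t₀ h with h' | h'
      · exact ha0 h'
      · exact hb0 h'
    have hIne : I ≠ Finset.univ := fun h => ht0I (h ▸ Finset.mem_univ t₀)
    have h2I : 2 ≤ I.card := by
      by_contra hlt2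
      have hc1 : I.card = 1 := by
        have := Finset.card_pos.mpr ⟨t1, ht1⟩
        omega
      obtain ⟨t3, ht3⟩ := Finset.card_eq_one.mp hc1
      have ht3I : t3 ∈ I := by rw [ht3]; exact Finset.mem_singleton_self t3
      have hA2t : A2 = S2 t3 := by
        refine le_antisymm (Finset.inf'_le _ ht3I) (Finset.le_inf' hI _ fun t ht => ?_)
        rw [ht3, Finset.mem_singleton] at ht
        rw [ht]
      have hsum3 : ∑ t ∈ I, ((k : ℤ) - ((S t).card : ℤ)) = (k : ℤ) - ((S t3).card : ℤ) := by
        rw [ht3, Finset.sum_singleton]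
      rw [hsum3, hA2t, hcard2 t3] at hlt'
      exact absurd hlt' (lt_irrefl _)
    exact no_tight hmin I hI h2I hIne htight
  -- Step 6: contradiction with minimality
  have CE : IsCounterexample m nn k S2 := by
    refine ⟨hm2, ?_, ?_, hGM2, q2, ⟨t₂, hq2ne⟩, hq2deg, hq2rel⟩
    · intro t
      rw [hcard2 t]
      exact hcard t
    · rw [show (∑ t, (S2 t).card) = ∑ t, (S t).card from
        Finset.sum_congr rfl fun t _ => hcard2 t]
      exact hsum
  rcases hminim m nn k S2 CE with h | ⟨_, h | ⟨h, _⟩⟩ <;> omega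

end GMaux

/-- **Lemma 2 (ii).** For a minimal counterexample, for all `i ≠ j ∈ [n]`:
if `Q_i ∩ Q_j = ∅` then `Q_j = [m] \ Q_i`. -/
theorem minimal_counterexample_disjoint_complement (m n k : ℕ) (S : Fin m → Finset (Fin n))
    (hmin : IsMinimalCounterexample m n k S) :
    ∀ i j : Fin n, i ≠ j → Q S i ∩ Q S j = ∅ → Q S j = Finset.univ \ Q S i := by
  intro i j hij hdis
  by_contra hne
  have hdisj : ∀ t, ¬(i ∈ S t ∧ j ∈ S t) := by
    rintro t ⟨h1, h2⟩
    have ht : t ∈ Q S i ∩ Q S j := by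
      simp [Q, h1, h2]
    rw [hdis] at ht
    exact absurd ht (Finset.notMem_empty t)
  have hsub : Q S j ⊆ Finset.univ \ Q S i := by
    intro t ht
    simp only [Finset.mem_sdiff, Finset.mem_univ, true_and]
    intro hti
    have ht2 : t ∈ Q S i ∩ Q S j := Finset.mem_inter.mpr ⟨hti, ht⟩
    rw [hdis] at ht2
    exact absurd ht2 (Finset.notMem_empty t)
  obtain ⟨t₀, ht₀mem, ht₀not⟩ := Finset.exists_of_ssubset (lt_of_le_of_ne hsub hne)
  have hi0 : i ∉ S t₀ := by
    have := (Finset.mem_sdiff.mp ht₀mem).2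
    simpa [Q] using this
  have hj0 : j ∉ S t₀ := by simpa [Q] using ht₀not
  exact GMaux.no_merge hmin i j hij hdisj t₀ hi0 hj0
end

section
/- If (S_1,…,S_m) is a counterexample with parameters (m,n,k) that is minimal in the lexicographic order on (m,n,k), then for all i, j in {1,…,n}: |Q_i ∪ Q_j| ≠ m−1, where Q_ℓ = {t ∈ {1,…,m} : ℓ ∈ S_t}. -/
/-! If `|Q_i ∪ Q_j| = m - 1`, exactly one index `t₀` has `i, j ∉ S_{t₀}`.

Minimality first excludes tight blocks: if `I` with `2 ≤ |I| < m` satisfied the GM inequality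
with equality, a relation either lives on `I` after cancelling `p_Z`, `Z = ⋂_{t ∈ I} S_t`, or
survives when the block `I` is merged into the single set `Z`; both give counterexamples with
fewer sets.

Existence of a relation is the vanishing of a determinant that is polynomial in the `α`'s, so a
relation survives the specialisation `α_j := α_i`. Then `x - α_i` divides `p_{S_t}` for every
`t ≠ t₀` but not `p_{S_{t₀}}`, hence divides `q_{t₀}`. Cancelling it removes `j` (or else `i`) from
each `S_t`, `t ≠ t₀`, and lowers `k` by one; without tight blocks the GM condition survives. As
`j` no longer occurs, this is a counterexample with parameters `(m, n - 1, k - 1)`, or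
`(m - 1, n - 1, k - 1)` after discarding `t₀` when `|S_{t₀}| = k - 1`: a contradiction. -/

open Finset Polynomial Lagrange

section Development

variable {σ σ' ι ι' F : Type*}

theorem notMem_erase_ite_self [DecidableEq ι] (s : Finset ι) (i j : ι) :
    j ∉ s.erase (if j ∈ s then j else i) := by
  split_ifs with hj
  · exact notMem_erase j s
  · exact fun h => hj (mem_of_mem_erase h)

theorem degree_lt_tsub_iff [Semiring F] {p : F[X]} {k s : ℕ} :
    p.degree < ↑(k - s) ↔ (p ≠ 0 → (p.natDegree : ℤ) ≤ k - 1 - s) := by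
  rcases eq_or_ne p 0 with rfl | hp
  · simp
  rw [← natDegree_lt_iff_degree_lt hp]
  simp only [ne_eq, hp, not_false_eq_true, forall_const]
  omega

section Relation

variable [CommRing F] {k : ℕ} {S : σ → Finset ι} {a : ι → F} {s : Finset σ}

-- `k - #(S t)` truncates: an index with `#(S t) ≥ k` can only carry `q t = 0`.
def HasRelOn (k : ℕ) (S : σ → Finset ι) (a : ι → F) (s : Finset σ) : Prop :=
  ∃ q : σ → F[X], (∃ t ∈ s, q t ≠ 0) ∧ (∀ t ∈ s, (q t).degree < ↑(k - #(S t))) ∧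
    ∑ t ∈ s, q t * nodal (S t) a = 0

theorem degree_mul_nodal_lt [Nontrivial F] {p : F[X]} {K : ℕ} {s : Finset ι}
    (h : p.degree < ↑(K - #s)) : (p * nodal s a).degree < K := by
  rcases eq_or_ne p 0 with rfl | hp
  · simp
  rw [nodal_monic.degree_mul, degree_nodal, degree_eq_natDegree hp]
  rw [degree_eq_natDegree hp] at h
  norm_cast at h ⊢
  omega

theorem degree_lt_of_X_sub_C_mul_degree_lt [IsDomain F] {p : F[X]} {c : F} {N : ℕ}
    (h : ((X - C c) * p).degree < ↑N) : p.degree < ↑(N - 1) := by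
  rcases eq_or_ne p 0 with rfl | hp
  · exact WithBot.bot_lt_coe _
  rw [← natDegree_lt_iff_degree_lt (mul_ne_zero (X_sub_C_ne_zero c) hp),
    natDegree_mul (X_sub_C_ne_zero c) hp, natDegree_X_sub_C] at h
  rw [← natDegree_lt_iff_degree_lt hp]
  omega

theorem isRoot_of_sum_mul_eq_zero [IsDomain F] [DecidableEq σ] {q p : σ → F[X]} {c : F}
    {t₀ : σ} (hrel : ∑ t ∈ s, q t * p t = 0) (ht₀ : t₀ ∈ s)
    (hp : ∀ t ∈ s, t ≠ t₀ → (p t).IsRoot c) (hp₀ : ¬(p t₀).IsRoot c) : (q t₀).IsRoot c := by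
  have h₀ := congrArg (eval c) hrel
  rw [eval_finsetSum, ← add_sum_erase s _ ht₀, eval_mul, sum_eq_zero fun t ht => by
    rw [eval_mul, (hp t (mem_of_mem_erase ht) (ne_of_mem_erase ht)).eq_zero, mul_zero],
    add_zero, eval_zero] at h₀
  exact (mul_eq_zero.mp h₀).resolve_right hp₀

theorem HasRelOn.one_lt_card [IsDomain F] (h : HasRelOn k S a s) : 1 < #s := by
  obtain ⟨q, ⟨t, ht, hqt⟩, -, hrel⟩ := h
  by_contra hs
  rw [eq_singleton_iff_unique_mem.mpr ⟨ht, fun u hu => card_le_one.mp (not_lt.mp hs) u hu t ht⟩,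
    sum_singleton] at hrel
  exact mul_ne_zero hqt nodal_ne_zero hrel

theorem HasRelOn.erase_of_le [DecidableEq σ] {t₀ : σ} (hk : k ≤ #(S t₀))
    (h : HasRelOn k S a s) : HasRelOn k S a (s.erase t₀) := by
  by_cases ht₀ : t₀ ∉ s
  · rwa [erase_eq_of_notMem ht₀]
  obtain ⟨q, ⟨t, ht, hqt⟩, hdeg, hrel⟩ := h
  have hq₀ : q t₀ = 0 := by
    have := hdeg t₀ (not_not.mp ht₀)
    rwa [Nat.sub_eq_zero_of_le hk, Nat.cast_zero, Nat.WithBot.lt_zero_iff, degree_eq_bot] at this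
  refine ⟨q, ⟨t, mem_erase.mpr ⟨fun h => hqt (h ▸ hq₀), ht⟩, hqt⟩,
    fun t ht => hdeg t (mem_of_mem_erase ht), ?_⟩
  rwa [sum_erase s (by rw [hq₀, zero_mul])]

theorem HasRelOn.comp_embedding (e : σ' ↪ σ) {s : Finset σ'} (h : HasRelOn k S a (s.map e)) :
    HasRelOn k (S ∘ e) a s := by
  obtain ⟨q, ⟨t, ht, hqt⟩, hdeg, hrel⟩ := h
  obtain ⟨u, hu, rfl⟩ := mem_map.mp ht
  exact ⟨q ∘ e, ⟨u, hu, hqt⟩, fun t ht => hdeg (e t) (mem_map_of_mem e ht),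
    by rwa [sum_map] at hrel⟩

theorem HasRelOn.congr {b : ι → F} (h : HasRelOn k S a s)
    (hab : ∀ t ∈ s, ∀ ℓ ∈ S t, a ℓ = b ℓ) : HasRelOn k S b s := by
  obtain ⟨q, hq, hdeg, hrel⟩ := h
  refine ⟨q, hq, hdeg, ?_⟩
  rw [← hrel]
  exact sum_congr rfl fun t ht => by
    rw [nodal, nodal, prod_congr rfl fun ℓ hℓ => by rw [← hab t ht ℓ hℓ]]

theorem hasRelOn_map_iff {T : σ → Finset ι'} (e : ι' ↪ ι) :
    HasRelOn k (fun t => (T t).map e) a s ↔ HasRelOn k T (a ∘ e) s := by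
  simp only [HasRelOn, card_map, nodal, prod_map, Function.comp_apply]

theorem HasRelOn.erase_root [IsDomain F] [DecidableEq σ] [DecidableEq ι] {c : F} {t₀ : σ}
    {r : σ → ι} (h : HasRelOn k S a s) (ht₀ : t₀ ∈ s)
    (hr : ∀ t ∈ s, t ≠ t₀ → r t ∈ S t ∧ a (r t) = c) (hr₀ : r t₀ ∉ S t₀)
    (hc : ∀ ℓ ∈ S t₀, c ≠ a ℓ) : HasRelOn (k - 1) (fun t => (S t).erase (r t)) a s := by
  obtain ⟨q, ⟨t₁, ht₁, hqt₁⟩, hdeg, hrel⟩ := h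
  have hfactor : ∀ t ∈ s, t ≠ t₀ → nodal (S t) a = (X - C c) * nodal ((S t).erase (r t)) a :=
    fun t ht h => by rw [← (hr t ht h).2]; exact nodal_eq_mul_nodal_erase (hr t ht h).1
  have hroot : (q t₀).IsRoot c := isRoot_of_sum_mul_eq_zero hrel ht₀
    (fun t ht h => (hr t ht h).2 ▸ eval_nodal_at_node (hr t ht h).1) (eval_nodal_not_at_node hc)
  have hdiv : (X - C c) * (q t₀ /ₘ (X - C c)) = q t₀ := mul_divByMonic_eq_iff_isRoot.mpr hroot
  have hS₀ : (S t₀).erase (r t₀) = S t₀ := erase_eq_of_notMem hr₀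
  obtain ⟨q', hq'₀, hq'⟩ : ∃ q' : σ → F[X], q' t₀ = q t₀ /ₘ (X - C c) ∧ ∀ t ≠ t₀, q' t = q t :=
    ⟨Function.update q t₀ _, Function.update_self .., fun t h => Function.update_of_ne h ..⟩
  have hq : ∀ t ∈ s,
      (X - C c) * (q' t * nodal ((S t).erase (r t)) a) = q t * nodal (S t) a := by
    intro t ht
    rcases eq_or_ne t t₀ with rfl | h
    · rw [hS₀, hq'₀, ← mul_assoc, hdiv]
    · rw [hq' t h, hfactor t ht h]
      ring
  refine ⟨q', ⟨t₁, ht₁, fun h0 => hqt₁ ?_⟩, fun t ht => ?_, ?_⟩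
  · rcases eq_or_ne t₁ t₀ with rfl | h
    · rw [← hdiv, ← hq'₀, h0, mul_zero]
    · rwa [hq' t₁ h] at h0
  · dsimp only
    rcases eq_or_ne t t₀ with rfl | h
    · rw [hS₀, Nat.sub_right_comm]
      exact degree_lt_of_X_sub_C_mul_degree_lt (c := c) (by rw [hq'₀, hdiv]; exact hdeg t ht)
    · rw [hq' t h, card_erase_of_mem (hr t ht h).1,
        Nat.sub_sub_sub_cancel_right (card_pos.mpr ⟨_, (hr t ht h).1⟩)]
      exact hdeg t ht
  · refine mul_left_cancel₀ (X_sub_C_ne_zero c) ?_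
    rw [mul_sum, sum_congr rfl hq, hrel, mul_zero]

theorem HasRelOn.sdiff_or_update [IsDomain F] [DecidableEq σ] [DecidableEq ι] {I : Finset σ}
    {Z : Finset ι} {t₁ : σ} (h : HasRelOn k S a s) (hI : I ⊆ s) (ht₁ : t₁ ∈ I)
    (hZ : ∀ t ∈ I, Z ⊆ S t) :
    HasRelOn (k - #Z) (fun t => S t \ Z) a I ∨
      HasRelOn k (Function.update S t₁ Z) a (insert t₁ (s \ I)) := by
  obtain ⟨q, ⟨t₂, ht₂, hq₂⟩, hdeg, hrel⟩ := h
  have hdegI : ∀ t ∈ I, (q t).degree < ↑(k - #Z - #(S t \ Z)) := fun t ht => by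
    rw [card_sdiff_of_subset (hZ t ht), Nat.sub_sub_sub_cancel_right (card_le_card (hZ t ht))]
    exact hdeg t (hI ht)
  set G := ∑ t ∈ I, q t * nodal (S t \ Z) a
  have hGZ : G * nodal Z a = ∑ t ∈ I, q t * nodal (S t) a := by
    rw [sum_mul]
    refine sum_congr rfl fun t ht => ?_
    rw [mul_assoc, nodal, nodal, nodal, prod_sdiff (hZ t ht)]
  have ht₁' : t₁ ∉ s \ I := fun h => (mem_sdiff.mp h).2 ht₁
  have hne : ∀ t ∈ s \ I, t ≠ t₁ := fun t ht h => ht₁' (h ▸ ht)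
  have hq : ∀ t ∈ s \ I, Function.update q t₁ G t = q t :=
    fun t ht => Function.update_of_ne (hne t ht) ..
  by_cases hA : G = 0 ∧ ∀ t ∈ s \ I, q t = 0
  · refine .inl ⟨q, ⟨t₂, ?_, hq₂⟩, hdegI, hA.1⟩
    by_contra ht
    exact hq₂ (hA.2 t₂ (mem_sdiff.mpr ⟨ht₂, ht⟩))
  refine .inr ⟨Function.update q t₁ G, ?_, fun t ht => ?_, ?_⟩
  · rcases not_and_or.mp hA with hG | hq'
    · exact ⟨t₁, mem_insert_self _ _, by rwa [Function.update_self]⟩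
    · obtain ⟨t, ht, hqt⟩ := not_forall₂.mp hq'
      exact ⟨t, mem_insert_of_mem ht, by rwa [hq t ht]⟩
  · rcases mem_insert.mp ht with rfl | ht
    · rw [Function.update_self, Function.update_self]
      exact mem_degreeLT.mp <|
        sum_mem fun t ht => mem_degreeLT.mpr (degree_mul_nodal_lt (hdegI t ht))
    · rw [hq t ht, Function.update_of_ne (hne t ht)]
      exact hdeg t (mem_sdiff.mp ht).1
  · rw [sum_insert ht₁', Function.update_self, Function.update_self, hGZ, add_comm,
      sum_congr rfl fun t ht => by rw [hq t ht, Function.update_of_ne (hne t ht)],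
      sum_sdiff hI, hrel]

end Relation

noncomputable section Determinant

open scoped Matrix

variable [CommRing F] {k : ℕ} {S : σ → Finset ι} {a : ι → F}

def relMatrix (k : ℕ) (S : σ → Finset ι) (a : ι → F) :
    Matrix (Fin k) (Σ t, Fin (k - #(S t))) F :=
  fun r c => (X ^ (c.2 : ℕ) * nodal (S c.1) a).coeff r

def vecPoly (v : (Σ t, Fin (k - #(S t))) → F) (t : σ) : F[X] :=
  ∑ d : Fin (k - #(S t)), C (v ⟨t, d⟩) * X ^ (d : ℕ)

theorem coeff_vecPoly (v : (Σ t, Fin (k - #(S t))) → F) (t : σ) (d : Fin (k - #(S t))) :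
    (vecPoly v t).coeff d = v ⟨t, d⟩ := by
  simp [vecPoly, coeff_X_pow, Fin.val_eq_val]

theorem vecPoly_coeff {q : σ → F[X]} {t : σ} (h : (q t).degree < ↑(k - #(S t))) :
    vecPoly (k := k) (S := S) (fun c => (q c.1).coeff c.2) t = q t := by
  rw [vecPoly, sum_fin (fun n c => C c * X ^ n) (by simp) h, sum_C_mul_X_pow_eq]

variable [Fintype σ]

-- Polynomial in the nodes and zero exactly when a relation exists: this is what lets relations
-- be specialised and moved along ring maps.
def relDet (hsum : ∑ t, (k - #(S t)) = k) (a : ι → F) : F :=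
  ((relMatrix k S a).submatrix id (Fintype.equivFinOfCardEq (by simp [hsum])).symm).det

theorem relDet_map {F' : Type*} [CommRing F'] (φ : F →+* F') (hsum : ∑ t, (k - #(S t)) = k)
    (a : ι → F) : relDet hsum (φ ∘ a) = φ (relDet hsum a) := by
  rw [relDet, relDet, RingHom.map_det]
  congr 1
  ext r c
  simp [relMatrix, ← coeff_map, nodal, Polynomial.map_prod]

theorem relMatrix_mulVec (v : (Σ t, Fin (k - #(S t))) → F) (r : Fin k) :
    (relMatrix k S a *ᵥ v) r = (∑ t, vecPoly v t * nodal (S t) a).coeff r := by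
  simp only [Matrix.mulVec, dotProduct, relMatrix, Fintype.sum_sigma, finsetSum_coeff, vecPoly,
    sum_mul]
  refine sum_congr rfl fun t _ => sum_congr rfl fun d _ => ?_
  rw [mul_assoc, coeff_C_mul, mul_comm]

theorem hasRelOn_univ_iff_exists_mulVec [IsDomain F] :
    HasRelOn k S a univ ↔ ∃ v ≠ 0, relMatrix k S a *ᵥ v = 0 := by
  constructor
  · rintro ⟨q, ⟨t, -, hqt⟩, hdeg, hrel⟩
    have hq : ∀ t, vecPoly (k := k) (S := S) (fun c => (q c.1).coeff c.2) t = q t :=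
      fun t => vecPoly_coeff (hdeg t (mem_univ t))
    refine ⟨fun c => (q c.1).coeff c.2, fun hv => hqt ?_, ?_⟩
    · rw [← hq t, hv]
      simp [vecPoly]
    · ext r
      rw [relMatrix_mulVec]
      simp [hq, hrel]
  · rintro ⟨v, hv, hMv⟩
    obtain ⟨c, hc⟩ := not_forall.mp (mt funext hv)
    refine ⟨vecPoly v, ⟨c.1, mem_univ _, fun h => hc ?_⟩, fun t _ => degree_sum_fin_lt _, ?_⟩
    · simpa [h] using (coeff_vecPoly v c.1 c.2).symm
    · ext r
      rcases lt_or_ge r k with hr | hr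
      · simpa [relMatrix_mulVec] using congrFun hMv ⟨r, hr⟩
      · refine (coeff_eq_zero_of_degree_lt ?_).trans (coeff_zero r).symm
        exact mem_degreeLT.mp <| sum_mem fun t _ => mem_degreeLT.mpr <|
          (degree_mul_nodal_lt (degree_sum_fin_lt _)).trans_le (by exact_mod_cast hr)

theorem hasRelOn_univ_iff_relDet_eq_zero [IsDomain F] (hsum : ∑ t, (k - #(S t)) = k) :
    HasRelOn k S a univ ↔ relDet hsum a = 0 := by
  classical
  rw [hasRelOn_univ_iff_exists_mulVec, relDet, ← Matrix.exists_mulVec_eq_zero_iff]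
  generalize Fintype.equivFinOfCardEq (α := Σ t, Fin (k - #(S t))) _ = e
  simp only [Matrix.submatrix_mulVec_equiv, Equiv.symm_symm, Function.comp_id]
  constructor
  · rintro ⟨v, hv, h⟩
    refine ⟨v ∘ e.symm, fun h0 => hv ?_, by simpa [Function.comp_assoc]⟩
    simpa [Function.comp_assoc] using congrArg (· ∘ e) h0
  · rintro ⟨w, hw, h⟩
    refine ⟨w ∘ e, fun h0 => hw ?_, h⟩
    simpa [Function.comp_assoc] using congrArg (· ∘ e.symm) h0

end Determinant

noncomputable section Generic

def indet (n : ℕ) : Fin n → Kf n :=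
  fun ℓ => algebraMap (MvPolynomial (Fin n) ℚ) (Kf n) (MvPolynomial.X ℓ)

theorem indet_injective (n : ℕ) : Function.Injective (indet n) :=
  (IsFractionRing.injective _ _).comp MvPolynomial.X_injective

theorem pS_eq_nodal {n : ℕ} (s : Finset (Fin n)) : pS s = nodal s (indet n) := rfl

variable [Fintype σ] {k n : ℕ}

theorem hasRelOn_indet_iff {S : σ → Finset (Fin n)} (hsum : ∑ t, (k - #(S t)) = k) :
    HasRelOn k S (indet n) univ ↔
      relDet hsum (MvPolynomial.X : Fin n → MvPolynomial (Fin n) ℚ) = 0 := by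
  rw [hasRelOn_univ_iff_relDet_eq_zero hsum,
    show indet n = algebraMap _ (Kf n) ∘ MvPolynomial.X from rfl, relDet_map,
    map_eq_zero_iff _ (IsFractionRing.injective _ _)]

theorem HasRelOn.specialize {S : σ → Finset (Fin n)} (hsum : ∑ t, (k - #(S t)) = k)
    (h : HasRelOn k S (indet n) univ) {F : Type*} [Field F] [Algebra ℚ F] (a : Fin n → F) :
    HasRelOn k S a univ := by
  have ha : a = MvPolynomial.aeval (R := ℚ) a ∘ MvPolynomial.X :=
    funext fun ℓ => (MvPolynomial.aeval_X a ℓ).symm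
  rw [hasRelOn_univ_iff_relDet_eq_zero hsum, ha]
  rw [hasRelOn_indet_iff hsum] at h
  exact (relDet_map (MvPolynomial.aeval (R := ℚ) a).toRingHom hsum _).trans (by simp [h])

theorem HasRelOn.of_indet_comp {n' : ℕ} {S : σ → Finset (Fin n')}
    (hsum : ∑ t, (k - #(S t)) = k) {e : Fin n' → Fin n} (he : Function.Injective e)
    (h : HasRelOn k S (indet n ∘ e) univ) : HasRelOn k S (indet n') univ := by
  rw [hasRelOn_univ_iff_relDet_eq_zero hsum] at h
  rw [hasRelOn_indet_iff hsum]
  have hcomp : indet n ∘ e =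
      algebraMap _ (Kf n) ∘ (MvPolynomial.rename (R := ℚ) e).toRingHom ∘ MvPolynomial.X := by
    ext ℓ
    simp [indet]
  rw [hcomp, relDet_map, relDet_map, map_eq_zero_iff _ (IsFractionRing.injective _ _)] at h
  exact (map_eq_zero_iff _ (MvPolynomial.rename_injective e he)).mp h

end Generic

section GM

variable [DecidableEq ι] {k : ℕ} {S : σ → Finset ι} {s : Finset σ}

def GMOn [Fintype ι] (k : ℕ) (S : σ → Finset ι) (s : Finset σ) : Prop :=
  ∀ J ⊆ s, J.Nonempty → ∑ t ∈ J, ((k : ℤ) - #(S t)) + #(J.inf S) ≤ k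

variable [Fintype ι]

theorem GMOn.mono {s' : Finset σ} (h : GMOn k S s) (hs : s' ⊆ s) : GMOn k S s' :=
  fun J hJ => h J (hJ.trans hs)

theorem GMOn.comp_embedding (e : σ' ↪ σ) {s : Finset σ'} (h : GMOn k S (s.map e)) :
    GMOn k (S ∘ e) s := by
  intro J hJ hne
  simpa [sum_map, inf_map] using h (J.map e) (map_subset_map.mpr hJ) hne.map

theorem GMOn.of_map [Fintype ι'] [DecidableEq ι'] {T : σ → Finset ι'} (e : ι' ↪ ι)
    (h : GMOn k (fun t => (T t).map e) s) : GMOn k T s := by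
  intro J hJ hne
  have hsub : (J.inf T).map e ⊆ J.inf fun t => (T t).map e :=
    Finset.le_inf fun t ht => map_subset_map.mpr (inf_le ht)
  have hcard : (#(J.inf T) : ℤ) ≤ #(J.inf fun t => (T t).map e) := by
    exact_mod_cast (card_map e).symm.trans_le (card_le_card hsub)
  have := h J hJ hne
  simp only [card_map] at this
  linarith

theorem GMOn.sdiff_inf {I : Finset σ} (h : GMOn k S s) (hI : I ⊆ s) (hk : #(I.inf S) ≤ k) :
    GMOn (k - #(I.inf S)) (fun t => S t \ I.inf S) I := by
  intro J hJ hne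
  have hZJ : I.inf S ⊆ J.inf S := inf_mono hJ
  have hZS : ∀ t ∈ J, I.inf S ⊆ S t := fun t ht => hZJ.trans (inf_le ht)
  have hterm : ∀ t ∈ J, ((k - #(I.inf S) : ℕ) : ℤ) - #(S t \ I.inf S) = k - #(S t) := by
    intro t ht
    rw [card_sdiff_of_subset (hZS t ht), Nat.cast_sub hk, Nat.cast_sub (card_le_card (hZS t ht))]
    ring
  rw [sum_congr rfl hterm, inf_sdiff_right hne, card_sdiff_of_subset hZJ, Nat.cast_sub hk,
    Nat.cast_sub (card_le_card hZJ)]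
  linarith [h J (hJ.trans hI) hne]

theorem GMOn.update_inf [DecidableEq σ] {I : Finset σ} {t₁ : σ} (h : GMOn k S s) (hI : I ⊆ s)
    (ht₁ : t₁ ∈ I) (htight : ∑ t ∈ I, ((k : ℤ) - #(S t)) + #(I.inf S) = k) :
    GMOn k (Function.update S t₁ (I.inf S)) (insert t₁ (s \ I)) := by
  intro J hJ hne
  have hJ₀ : J.erase t₁ ⊆ s \ I := fun t ht =>
    (mem_insert.mp (hJ (mem_of_mem_erase ht))).resolve_left (ne_of_mem_erase ht)
  have hS : ∀ t ∈ J.erase t₁, Function.update S t₁ (I.inf S) t = S t :=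
    fun t ht => Function.update_of_ne (ne_of_mem_erase ht) ..
  by_cases ht₁J : t₁ ∈ J
  · have hdisj : Disjoint (J.erase t₁) I := disjoint_of_subset_left hJ₀ sdiff_disjoint
    have key := h (J.erase t₁ ∪ I) (union_subset (hJ₀.trans sdiff_subset) hI)
      ⟨t₁, mem_union_right _ ht₁⟩
    rw [sum_union hdisj, inf_union] at key
    rw [← insert_erase ht₁J, sum_insert (notMem_erase _ _), inf_insert, Function.update_self,
      sum_congr rfl fun t ht => by rw [hS t ht], inf_congr rfl hS, inf_comm]
    linarith
  · rw [← erase_eq_of_notMem ht₁J] at hne ⊢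
    rw [sum_congr rfl fun t ht => by rw [hS t ht], inf_congr rfl hS]
    exact h _ (hJ₀.trans sdiff_subset) hne

-- A block through `t₀` gains one unit of slack from `t₀`; any other block of size `≥ 2` has
-- slack by `hstrict`, and singletons are always tight.
theorem GMOn.pred [DecidableEq σ] {V : σ → Finset ι} {t₀ : σ} (h : GMOn k S s)
    (hstrict : ∀ J ⊆ s, 2 ≤ #J → J ≠ s → ∑ t ∈ J, ((k : ℤ) - #(S t)) + #(J.inf S) < k)
    (hk : 1 ≤ k) (ht₀ : t₀ ∈ s) (hVS : ∀ t, V t ⊆ S t) (hV₀ : #(V t₀) = #(S t₀))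
    (hV : ∀ t ∈ s, t ≠ t₀ → #(V t) + 1 = #(S t)) : GMOn (k - 1) V s := by
  intro J hJ hne
  have hinf : (#(J.inf V) : ℤ) ≤ #(J.inf S) := by
    exact_mod_cast card_le_card (inf_mono_fun fun t _ => hVS t)
  have hsum : ∑ t ∈ J, (((k - 1 : ℕ) : ℤ) - #(V t)) =
      ∑ t ∈ J, ((k : ℤ) - #(S t)) - if t₀ ∈ J then 1 else 0 := by
    rw [← sum_ite_eq' J t₀ (fun _ => (1 : ℤ)), ← sum_sub_distrib]
    refine sum_congr rfl fun t ht => ?_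
    rcases eq_or_ne t t₀ with rfl | h
    · rw [if_pos rfl, Nat.cast_sub hk, hV₀]
      ring
    · have := hV t (hJ ht) h
      rw [if_neg h, Nat.cast_sub hk]
      omega
  rw [hsum]
  by_cases ht₀J : t₀ ∈ J
  · rw [if_pos ht₀J]
    push_cast [hk]
    linarith [h J hJ hne]
  rw [if_neg ht₀J, sub_zero]
  rcases (one_le_card.mpr hne).eq_or_lt with hJ1 | hJ2
  · obtain ⟨t, rfl⟩ := card_eq_one.mp hJ1.symm
    have := hV t (hJ (mem_singleton_self t)) fun h => ht₀J (h ▸ mem_singleton_self t)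
    simp only [sum_singleton, inf_singleton]
    omega
  · have := hstrict J hJ hJ2 fun hJs => ht₀J (hJs ▸ ht₀)
    push_cast [hk]
    linarith

end GM

section Counterexample

variable {n k : ℕ} {S : σ → Finset (Fin n)} {s : Finset σ}

-- `IsCounterexample` for the subfamily indexed by `s`, with `∑ |S_t| = (#s - 1) k` written
-- without truncated subtraction; `2 ≤ #s` follows from `hasRelOn` (`HasRelOn.one_lt_card`).
structure IsCounterexampleOn (n k : ℕ) (S : σ → Finset (Fin n)) (s : Finset σ) : Prop where
  card_lt : ∀ t ∈ s, #(S t) < k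
  sum_card : ∑ t ∈ s, #(S t) + k = #s * k
  gmOn : GMOn k S s
  hasRelOn : HasRelOn k S (indet n) s

theorem IsCounterexampleOn.comp_embedding (e : σ' ↪ σ) {s : Finset σ'}
    (h : IsCounterexampleOn n k S (s.map e)) : IsCounterexampleOn n k (S ∘ e) s where
  card_lt t ht := h.card_lt (e t) (mem_map_of_mem e ht)
  sum_card := by simpa using h.sum_card
  gmOn := h.gmOn.comp_embedding e
  hasRelOn := h.hasRelOn.comp_embedding e

theorem IsCounterexampleOn.subtype (h : IsCounterexampleOn n k S s) :
    IsCounterexampleOn n k (fun t : s => S t) univ := by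
  rw [univ_eq_attach]
  exact .comp_embedding (Function.Embedding.subtype _) (by rwa [attach_map_val])

theorem isCounterexample_iff {m : ℕ} {S : Fin m → Finset (Fin n)} :
    IsCounterexample m n k S ↔ IsCounterexampleOn n k S univ := by
  have hsum_iff : 2 ≤ m → (∑ t, #(S t) = (m - 1) * k ↔ ∑ t, #(S t) + k = m * k) := fun hm => by
    rw [Nat.sub_one_mul]
    have := Nat.le_mul_of_pos_left k (by omega : 0 < m)
    omega
  have hgm_iff : GMCond m n k S ↔ GMOn k S univ := by
    refine ⟨fun h J _ hJ => ?_, fun h I hI => ?_⟩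
    · linarith [inf'_eq_inf hJ S ▸ h J hJ]
    · linarith [inf'_eq_inf hI S ▸ h I (subset_univ I) hI]
  constructor
  · rintro ⟨hm, hcard, hsum, hgm, q, ⟨i, hi⟩, hdeg, hrel⟩
    refine ⟨fun t _ => by linarith [hcard t], by simpa using (hsum_iff hm).mp hsum,
      hgm_iff.mp hgm, q, ⟨i, mem_univ i, hi⟩, fun t _ => degree_lt_tsub_iff.mpr (hdeg t), ?_⟩
    simpa [pS_eq_nodal] using hrel
  · intro h
    have hm : 1 < m := by simpa using h.hasRelOn.one_lt_card
    obtain ⟨hcard, hsum, hgm, q, ⟨i, -, hi⟩, hdeg, hrel⟩ := h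
    refine ⟨hm, fun t => by linarith [hcard t (mem_univ t)],
      (hsum_iff hm).mpr (by simpa using hsum), hgm_iff.mpr hgm, q, ⟨i, hi⟩,
      fun t => degree_lt_tsub_iff.mp (hdeg t (mem_univ t)), ?_⟩
    simpa [pS_eq_nodal] using hrel

theorem IsCounterexampleOn.isCounterexample [Fintype σ] (h : IsCounterexampleOn n k S univ) :
    IsCounterexample (Fintype.card σ) n k (S ∘ (Fintype.equivFin σ).symm) :=
  isCounterexample_iff.mpr <| .comp_embedding (Fintype.equivFin σ).symm.toEmbedding
    (by rwa [univ_map_equiv_to_embedding])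

theorem IsMinimalCounterexample.lex_le {m n₀ k₀ : ℕ} {S₀ : Fin m → Finset (Fin n₀)}
    (hmin : IsMinimalCounterexample m n₀ k₀ S₀) (h : IsCounterexampleOn n k S s) :
    m < #s ∨ (m = #s ∧ (n₀ < n ∨ (n₀ = n ∧ k₀ ≤ k))) := by
  simpa using hmin.2 _ _ _ _ h.subtype.isCounterexample

theorem IsCounterexampleOn.sum_tsub_card [Fintype σ] (h : IsCounterexampleOn n k S univ) :
    ∑ t, (k - #(S t)) = k := by
  have hadd : ∑ t, (k - #(S t)) + ∑ t, #(S t) = #(univ : Finset σ) * k := by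
    rw [← sum_add_distrib, sum_congr rfl fun t ht => Nat.sub_add_cancel (h.card_lt t ht).le]
    simp
  linarith [h.sum_card]

theorem IsCounterexampleOn.of_map [Fintype σ] {n' : ℕ} {T : σ → Finset (Fin n')}
    (e : Fin n' ↪ Fin n) (h : IsCounterexampleOn n k (fun t => (T t).map e) univ) :
    IsCounterexampleOn n' k T univ where
  card_lt t ht := by simpa using h.card_lt t ht
  sum_card := by simpa using h.sum_card
  gmOn := h.gmOn.of_map e
  hasRelOn := ((hasRelOn_map_iff e).mp h.hasRelOn).of_indet_comp
    (by simpa using h.sum_tsub_card) e.injective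

theorem IsCounterexampleOn.exists_of_notMem [Fintype σ] {S : σ → Finset (Fin (n + 1))}
    (h : IsCounterexampleOn (n + 1) k S univ) {j : Fin (n + 1)} (hj : ∀ t, j ∉ S t) :
    ∃ T : σ → Finset (Fin n), IsCounterexampleOn n k T univ := by
  have hmap : ∀ t, ∃ T ⊆ univ, S t = T.map j.succAboveEmb := fun t => subset_map_iff.mp
    fun x hx => by
      obtain ⟨y, rfl⟩ := Fin.exists_succAbove_eq (y := j) fun h => hj t (h ▸ hx)
      exact mem_map_of_mem _ (mem_univ y)
  choose T _ hT using hmap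
  exact ⟨T, .of_map j.succAboveEmb (by simpa only [← hT] using h)⟩

end Counterexample

section Reduction

variable {n k : ℕ} {S : σ → Finset (Fin n)} {s I : Finset σ}

theorem IsCounterexampleOn.sdiff_inf (h : IsCounterexampleOn n k S s) (hI : I ⊆ s)
    (htight : ∑ t ∈ I, ((k : ℤ) - #(S t)) + #(I.inf S) = k)
    (hrel : HasRelOn (k - #(I.inf S)) (fun t => S t \ I.inf S) (indet n) I) :
    IsCounterexampleOn n (k - #(I.inf S)) (fun t => S t \ I.inf S) I := by
  have hZ : ∀ t ∈ I, I.inf S ⊆ S t := fun t ht => inf_le ht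
  have hZk : #(I.inf S) ≤ k := by
    obtain ⟨-, ⟨t, ht, -⟩, -⟩ := hrel
    exact (card_le_card (hZ t ht)).trans (h.card_lt t (hI ht)).le
  refine ⟨fun t ht => ?_, ?_, h.gmOn.sdiff_inf hI hZk, hrel⟩
  · have := h.card_lt t (hI ht)
    have := card_le_card (hZ t ht)
    rw [card_sdiff_of_subset (hZ t ht)]
    omega
  · have hcast : ∀ t ∈ I, ((#(S t \ I.inf S) : ℕ) : ℤ) = #(S t) - #(I.inf S) := fun t ht => by
      rw [card_sdiff_of_subset (hZ t ht), Nat.cast_sub (card_le_card (hZ t ht))]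
    zify [hZk]
    rw [sum_congr rfl hcast, sum_sub_distrib]
    rw [sum_sub_distrib] at htight
    simp only [sum_const, nsmul_eq_mul] at htight ⊢
    linear_combination -htight

theorem IsCounterexampleOn.update_inf [DecidableEq σ] {t₁ : σ} (h : IsCounterexampleOn n k S s)
    (hI : I ⊆ s) (ht₁ : t₁ ∈ I) (htight : ∑ t ∈ I, ((k : ℤ) - #(S t)) + #(I.inf S) = k)
    (hrel : HasRelOn k (Function.update S t₁ (I.inf S)) (indet n) (insert t₁ (s \ I))) :
    IsCounterexampleOn n k (Function.update S t₁ (I.inf S)) (insert t₁ (s \ I)) := by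
  have ht₁' : t₁ ∉ s \ I := fun h => (mem_sdiff.mp h).2 ht₁
  have hne : ∀ t ∈ s \ I, t ≠ t₁ := fun t ht h => ht₁' (h ▸ ht)
  refine ⟨fun t ht => ?_, ?_, h.gmOn.update_inf hI ht₁ htight, hrel⟩
  · rcases mem_insert.mp ht with rfl | ht
    · rw [Function.update_self]
      exact (card_le_card (inf_le ht₁)).trans_lt (h.card_lt t (hI ht₁))
    · rw [Function.update_of_ne (hne t ht)]
      exact h.card_lt t (mem_sdiff.mp ht).1
  · rw [sum_insert ht₁', Function.update_self, card_insert_of_notMem ht₁',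
      sum_congr rfl fun t ht => by rw [Function.update_of_ne (hne t ht)]]
    have hsum := h.sum_card
    rw [← sum_sdiff hI] at hsum
    zify [hI, card_le_card hI] at hsum ⊢
    rw [card_sdiff_of_subset hI, Nat.cast_sub (card_le_card hI)]
    rw [sum_sub_distrib, sum_const, nsmul_eq_mul] at htight
    linear_combination hsum + htight

theorem IsMinimalCounterexample.gm_lt {m : ℕ} {S : Fin m → Finset (Fin n)}
    (hmin : IsMinimalCounterexample m n k S) :
    ∀ I ⊆ univ, 2 ≤ #I → I ≠ univ → ∑ t ∈ I, ((k : ℤ) - #(S t)) + #(I.inf S) < k := by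
  intro I hI hI2 hIu
  have h := isCounterexample_iff.mp hmin.1
  obtain ⟨t₁, ht₁⟩ : I.Nonempty := card_pos.mp (by omega)
  by_contra! hge
  have htight := le_antisymm (h.gmOn I hI ⟨t₁, ht₁⟩) hge
  have hIm : #I < m := by simpa using card_lt_card (Finset.ssubset_iff_subset_ne.mpr ⟨hI, hIu⟩)
  rcases h.hasRelOn.sdiff_or_update hI ht₁ fun t ht => inf_le ht with hrel | hrel
  · have := hmin.lex_le (h.sdiff_inf hI htight hrel)
    omega
  · have := hmin.lex_le (h.update_inf hI ht₁ htight hrel)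
    rw [card_insert_of_notMem fun h => (mem_sdiff.mp h).2 ht₁, card_sdiff_of_subset hI] at this
    simp only [card_univ, Fintype.card_fin] at this
    omega

-- If `#(S t₀) = k - 1`, the degree bound forces the coefficient of `t₀` to vanish, and `t₀` is
-- dropped from the family.
theorem IsCounterexampleOn.exists_of_pred [Fintype σ] [DecidableEq σ] {V : σ → Finset (Fin n)}
    {t₀ : σ} (h : IsCounterexampleOn n k S univ) (hV₀ : #(V t₀) = #(S t₀))
    (hV : ∀ t ≠ t₀, #(V t) + 1 = #(S t)) (hgm : GMOn (k - 1) V univ)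
    (hrel : HasRelOn (k - 1) V (indet n) univ) : ∃ s, IsCounterexampleOn n (k - 1) V s := by
  have hk := h.card_lt t₀ (mem_univ t₀)
  have hcard : ∀ t ≠ t₀, #(V t) < k - 1 := fun t ht => by
    have := hV t ht
    have := h.card_lt t (mem_univ t)
    omega
  have hsum : ∑ t, #(S t) = ∑ t, #(V t) + (#(univ : Finset σ) - 1) := by
    rw [← add_sum_erase _ _ (mem_univ t₀), ← add_sum_erase _ (fun t => #(V t)) (mem_univ t₀),
      hV₀, ← sum_congr rfl fun t ht => hV t (ne_of_mem_erase ht), sum_add_distrib,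
      ← card_erase_of_mem (mem_univ t₀), card_eq_sum_ones (univ.erase t₀)]
    ring
  have hV' : ∑ t, #(V t) = #(S t₀) + ∑ t ∈ univ.erase t₀, #(V t) := by
    rw [← hV₀]
    exact (add_sum_erase _ _ (mem_univ t₀)).symm
  have hsumS := h.sum_card
  have hm : 0 < #(univ : Finset σ) := card_pos.mpr ⟨t₀, mem_univ t₀⟩
  have hmk := Nat.le_mul_of_pos_left k hm
  rcases (Nat.succ_le_of_lt hk).lt_or_eq with hk' | hk'
  · refine ⟨univ, fun t _ => ?_, ?_, hgm, hrel⟩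
    · rcases eq_or_ne t t₀ with rfl | ht
      · omega
      · exact hcard t ht
    · rw [Nat.mul_sub_one]
      omega
  · refine ⟨univ.erase t₀, fun t ht => hcard t (ne_of_mem_erase ht), ?_,
      hgm.mono (erase_subset _ _), hrel.erase_of_le (by omega)⟩
    rw [card_erase_of_mem (mem_univ t₀), Nat.sub_one_mul, Nat.mul_sub_one]
    omega

theorem HasRelOn.erase_pair [Fintype σ] [DecidableEq σ] (h : HasRelOn k S (indet n) univ)
    (hsum : ∑ t, (k - #(S t)) = k) {t₀ : σ} {i j : Fin n} (hi : i ∉ S t₀) (hj : j ∉ S t₀)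
    (hcover : ∀ t ≠ t₀, i ∈ S t ∨ j ∈ S t) :
    HasRelOn (k - 1) (fun t => (S t).erase (if j ∈ S t then j else i)) (indet n) univ := by
  set a := Function.update (indet n) j (indet n i)
  have ha : ∀ ℓ ≠ j, a ℓ = indet n ℓ := fun ℓ h => Function.update_of_ne h ..
  have hai : a i = indet n i := by
    rcases eq_or_ne i j with rfl | hij
    · exact Function.update_self ..
    · exact ha i hij
  refine ((h.specialize hsum a).erase_root (c := indet n i) (mem_univ t₀) (fun t _ ht => ?_)
    (by simpa [hj] using hi) fun ℓ hℓ => ?_).congr fun t _ ℓ hℓ => ha ℓ ?_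
  · split_ifs with hjt
    · exact ⟨hjt, Function.update_self ..⟩
    · exact ⟨(hcover t ht).resolve_right hjt, hai⟩
  · rw [ha ℓ fun h => hj (h ▸ hℓ)]
    exact (indet_injective n).ne fun h => hi (h ▸ hℓ)
  · rintro rfl
    exact notMem_erase_ite_self _ _ _ hℓ

theorem IsCounterexampleOn.exists_erase_pair [Fintype σ] [DecidableEq σ]
    (h : IsCounterexampleOn n k S univ)
    (hstrict : ∀ I ⊆ univ, 2 ≤ #I → I ≠ univ → ∑ t ∈ I, ((k : ℤ) - #(S t)) + #(I.inf S) < k)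
    {t₀ : σ} {i j : Fin n} (hi : i ∉ S t₀) (hj : j ∉ S t₀)
    (hcover : ∀ t ≠ t₀, i ∈ S t ∨ j ∈ S t) :
    ∃ s, IsCounterexampleOn n (k - 1) (fun t => (S t).erase (if j ∈ S t then j else i)) s := by
  have hV₀ : #((S t₀).erase (if j ∈ S t₀ then j else i)) = #(S t₀) := by simp [hj, hi]
  have hV : ∀ t ≠ t₀, #((S t).erase (if j ∈ S t then j else i)) + 1 = #(S t) :=
    fun t ht => card_erase_add_one <| by
      split_ifs with hjt
      · exact hjt
      · exact (hcover t ht).resolve_right hjt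
  have hk := h.card_lt t₀ (mem_univ t₀)
  exact h.exists_of_pred hV₀ hV
    (h.gmOn.pred hstrict (by omega) (mem_univ t₀) (fun t => erase_subset _ _) hV₀
      fun t _ ht => hV t ht)
    (h.hasRelOn.erase_pair h.sum_tsub_card hi hj hcover)

end Reduction

end Development

/-- **Lemma 2 (iii).** For a minimal counterexample, for all `i, j ∈ [n]`:
`|Q_i ∪ Q_j| ≠ m - 1`. -/
theorem minimal_counterexample_union_card_ne (m n k : ℕ) (S : Fin m → Finset (Fin n))
    (hmin : IsMinimalCounterexample m n k S) :
    ∀ i j : Fin n, ((Q S i ∪ Q S j).card : ℤ) ≠ (m : ℤ) - 1 := by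
  intro i j hcard
  obtain ⟨t₀, ht₀⟩ : ∃ t₀, (Q S i ∪ Q S j)ᶜ = {t₀} :=
    card_eq_one.mp (by rw [card_compl, Fintype.card_fin]; omega)
  have hmem : ∀ t, t = t₀ ↔ ¬(i ∈ S t ∨ j ∈ S t) := fun t => by
    simpa [Q] using (Finset.ext_iff.mp ht₀ t).symm
  obtain ⟨hi, hj⟩ := not_or.mp ((hmem t₀).mp rfl)
  obtain ⟨s, hs⟩ := (isCounterexample_iff.mp hmin.1).exists_erase_pair hmin.gm_lt hi hj
    fun t ht => not_not.mp (mt (hmem t).mpr ht)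
  obtain ⟨n, rfl⟩ : ∃ n', n = n' + 1 := ⟨n - 1, by have := i.pos; omega⟩
  obtain ⟨T, hT⟩ := hs.subtype.exists_of_notMem fun t => notMem_erase_ite_self (S t) i j
  have hlex := hmin.lex_le hT
  have hsm := card_le_univ s
  simp only [card_univ, Fintype.card_coe, Fintype.card_fin] at hlex hsm
  omega
end

section
/- If (S_1,…,S_m) is a counterexample with parameters (m,n,k) that is minimal in the lexicographic order on (m,n,k), then for all i ≠ j in {1,…,m}, S_i is not a subset of S_j; equivalently, there exists ℓ ∈ {1,…,n} with i ∈ Q_ℓ and j ∉ Q_ℓ, where Q_ℓ = {t ∈ {1,…,m} : ℓ ∈ S_t}. -/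
/-- **Lemma 2 (iv).** For a minimal counterexample, for all `i ≠ j ∈ [m]`,
`S_i ⊄ S_j`; equivalently there exists `ℓ ∈ [n]` with `i ∈ Q_ℓ` and `j ∉ Q_ℓ`. -/
theorem minimal_counterexample_not_subset (m n k : ℕ) (S : Fin m → Finset (Fin n))
    (hmin : IsMinimalCounterexample m n k S) :
    ∀ i j : Fin m, i ≠ j → (¬ S i ⊆ S j) ∧ ∃ ℓ : Fin n, i ∈ Q S ℓ ∧ j ∉ Q S ℓ := by
  obtain ⟨⟨hm, hcard, hsum, hgm, _⟩, _⟩ := hmin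
  intro i j hij
  have hnot : ¬ S i ⊆ S j := by
    intro hsub
    have hI : ({i, j} : Finset (Fin m)).Nonempty := ⟨i, by simp⟩
    have h := hgm {i, j} hI
    have hinf : ({i, j} : Finset (Fin m)).inf' hI S = S i ⊓ S j := by
      simp [Finset.inf'_insert, Finset.inf'_singleton]
    rw [hinf, Finset.sum_pair hij, inf_eq_left.mpr hsub] at h
    have h1 := hcard j
    linarith
  refine ⟨hnot, ?_⟩
  obtain ⟨ℓ, hℓi, hℓj⟩ := Finset.not_subset.mp hnot
  exact ⟨ℓ, by simp [Q, hℓi], by simp [Q, hℓj]⟩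
end
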